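/- arXiv:1307.2169 — 10 statements merged into one kernel-verified Lean document; each statement's English description precedes it below -/
import Mathlib

section
/- For every nonnegative integrable function y on [0,∞), the L¹ norm of Ty equals the square of the L¹ norm of y, i.e. ∫₀^∞ (Ty)(x) dx = (∫₀^∞ y(x) dx)². In particular, if ‖y‖ = 1 then ‖Ty‖ = 1. -/
open MeasureTheory Set Real

/-- The gas-like market operator `T`:
`(Ty)(x) = ∬_{S(x)} y(u) y(v) / (u+v) du dv` with
`S(x) = {(u,v) : u > 0, v > 0, u + v > x}`. -/
noncomputable def Tgas (y : ℝ → ℝ) (x : ℝ) : ℝ :=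
  ∫ p in {p : ℝ × ℝ | 0 < p.1 ∧ 0 < p.2 ∧ x < p.1 + p.2},
    y p.1 * y p.2 / (p.1 + p.2)

lemma measSx (x : ℝ) :
    MeasurableSet {p : ℝ × ℝ | 0 < p.1 ∧ 0 < p.2 ∧ x < p.1 + p.2} := by
  have : {p : ℝ × ℝ | 0 < p.1 ∧ 0 < p.2 ∧ x < p.1 + p.2}
      = {p : ℝ × ℝ | 0 < p.1} ∩ ({p : ℝ × ℝ | 0 < p.2} ∩ {p : ℝ × ℝ | x < p.1 + p.2}) := rfl
  rw [this]
  exact (measurableSet_lt measurable_const measurable_fst).inter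
    ((measurableSet_lt measurable_const measurable_snd).inter
      (measurableSet_lt measurable_const (measurable_fst.add measurable_snd)))

lemma restrictQ :
    ((volume : Measure (ℝ × ℝ)).restrict (Ioi (0:ℝ) ×ˢ Ioi (0:ℝ)))
      = (volume.restrict (Ioi (0:ℝ))).prod (volume.restrict (Ioi (0:ℝ))) := by
  rw [Measure.volume_eq_prod, Measure.prod_restrict]

lemma main_meas (g : ℝ → ℝ) (hg : Measurable g) (h0 : ∀ t, 0 ≤ g t)
    (hint : IntegrableOn g (Ioi 0)) :
    (∫ x in Ioi (0:ℝ), Tgas g x) = (∫ x in Ioi (0:ℝ), g x) ^ 2 := by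
  set S : ℝ → Set (ℝ × ℝ) := fun x => {p : ℝ × ℝ | 0 < p.1 ∧ 0 < p.2 ∧ x < p.1 + p.2} with hS
  set Q : Set (ℝ × ℝ) := Ioi 0 ×ˢ Ioi 0 with hQ
  set F : ℝ × ℝ → ENNReal := fun p => ENNReal.ofReal (g p.1 * g p.2 / (p.1 + p.2)) with hF
  set H : ℝ → ℝ × ℝ → ENNReal := fun x => (S x).indicator F with hH
  set h : ℝ → ENNReal := fun x => ∫⁻ p, H x p with hh
  set I : ENNReal := ∫⁻ t in Ioi (0:ℝ), ENNReal.ofReal (g t) with hI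
  have hFmeas : Measurable F :=
    ((hg.comp measurable_fst).mul (hg.comp measurable_snd)).div
      (measurable_fst.add measurable_snd) |>.ennreal_ofReal
  have hUmeas : Measurable (Function.uncurry H) := by
    have : Function.uncurry H = Set.indicator
        {z : ℝ × ℝ × ℝ | 0 < z.2.1 ∧ 0 < z.2.2 ∧ z.1 < z.2.1 + z.2.2} (F ∘ Prod.snd) := by
      ext z
      simp only [Function.uncurry, hH, Set.indicator, hS]
      rfl
    rw [this]
    refine (hFmeas.comp measurable_snd).indicator ?_
    have : {z : ℝ × ℝ × ℝ | 0 < z.2.1 ∧ 0 < z.2.2 ∧ z.1 < z.2.1 + z.2.2}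
        = {z : ℝ × ℝ × ℝ | 0 < z.2.1} ∩ ({z | 0 < z.2.2} ∩ {z | z.1 < z.2.1 + z.2.2}) := rfl
    rw [this]
    exact (measurableSet_lt measurable_const (measurable_fst.comp measurable_snd)).inter
      ((measurableSet_lt measurable_const (measurable_snd.comp measurable_snd)).inter
        (measurableSet_lt measurable_fst
          ((measurable_fst.comp measurable_snd).add (measurable_snd.comp measurable_snd))))
  have hhmeas : Measurable h := hUmeas.lintegral_prod_right
  -- product integrability on Q
  have hprodint : IntegrableOn (fun p : ℝ × ℝ => g p.1 * g p.2) Q := by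
    rw [IntegrableOn, restrictQ]
    exact hint.mul_prod hint
  -- Step A : for x > 0, Tgas g x = (h x).toReal and ofReal (Tgas g x) = h x
  have stepA : ∀ x : ℝ, 0 < x → ENNReal.ofReal (Tgas g x) = h x := by
    intro x hx
    have hsub : S x ⊆ Q := fun p hp => ⟨hp.1, hp.2.1⟩
    have hintS : IntegrableOn (fun p : ℝ × ℝ => g p.1 * g p.2 / (p.1 + p.2)) (S x) := by
      refine Integrable.mono ((hprodint.mono_set hsub).const_mul x⁻¹) ?_ ?_
      · exact (((hg.comp measurable_fst).mul (hg.comp measurable_snd)).div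
          (measurable_fst.add measurable_snd)).aestronglyMeasurable
      · refine (ae_restrict_iff' (measSx x)).2 (Filter.Eventually.of_forall ?_)
        rintro p ⟨h1, h2, h3⟩
        have hgg : 0 ≤ g p.1 * g p.2 := mul_nonneg (h0 _) (h0 _)
        have hs : (0:ℝ) < p.1 + p.2 := lt_trans hx h3
        rw [Real.norm_eq_abs, Real.norm_eq_abs, abs_of_nonneg (div_nonneg hgg hs.le),
          abs_of_nonneg (mul_nonneg (inv_nonneg.2 hx.le) hgg)]
        rw [inv_mul_eq_div]
        gcongr
    have hnn : 0 ≤ᵐ[volume.restrict (S x)]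
        fun p : ℝ × ℝ => g p.1 * g p.2 / (p.1 + p.2) := by
      refine (ae_restrict_iff' (measSx x)).2 (Filter.Eventually.of_forall ?_)
      rintro p ⟨h1, h2, h3⟩
      exact div_nonneg (mul_nonneg (h0 _) (h0 _)) (lt_trans hx h3).le
    have := ofReal_integral_eq_lintegral_ofReal hintS hnn
    rw [Tgas, this, hh, hH]
    exact (lintegral_indicator (measSx x) F).symm
  -- Step B : swap
  have hswap : ∫⁻ x in Ioi (0:ℝ), h x = I * I := by
    have h1 : ∫⁻ x in Ioi (0:ℝ), h x
        = ∫⁻ p, ∫⁻ x in Ioi (0:ℝ), H x p := by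
      exact lintegral_lintegral_swap (hUmeas.aemeasurable)
    rw [h1]
    have h2 : ∀ p : ℝ × ℝ, (∫⁻ x in Ioi (0:ℝ), H x p)
        = Q.indicator (fun p : ℝ × ℝ => ENNReal.ofReal (g p.1) * ENNReal.ofReal (g p.2)) p := by
      intro p
      by_cases hp : 0 < p.1 ∧ 0 < p.2
      · have hs : (0:ℝ) < p.1 + p.2 := add_pos hp.1 hp.2
        have : ∀ x : ℝ, H x p = (Iio (p.1 + p.2)).indicator (fun _ => F p) x := by
          intro x
          simp only [hH, Set.indicator, hS, Set.mem_setOf_eq, Set.mem_Iio, hp.1, hp.2,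
            true_and]
        simp_rw [this]
        rw [lintegral_indicator measurableSet_Iio, setLIntegral_const,
          Measure.restrict_apply measurableSet_Iio]
        have : Iio (p.1 + p.2) ∩ Ioi 0 = Ioo 0 (p.1 + p.2) := by
          ext t; simp [mem_Ioo, mem_Iio, mem_Ioi, and_comm]
        rw [this, Real.volume_Ioo, Set.indicator_of_mem (by exact ⟨hp.1, hp.2⟩), hF]
        rw [sub_zero, ← ENNReal.ofReal_mul (div_nonneg (mul_nonneg (h0 _) (h0 _)) hs.le),
          div_mul_cancel₀ _ hs.ne', ENNReal.ofReal_mul (h0 _)]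
      · have hz : ∀ x : ℝ, H x p = 0 := by
          intro x
          refine Set.indicator_of_notMem ?_ _
          intro hmem
          exact hp ⟨hmem.1, hmem.2.1⟩
        simp_rw [hz]
        rw [lintegral_zero, Set.indicator_of_notMem (by
          intro hmem; exact hp ⟨hmem.1, hmem.2⟩)]
    simp_rw [h2]
    rw [lintegral_indicator (measurableSet_Ioi.prod measurableSet_Ioi), ← hQ, restrictQ]
    exact lintegral_prod_mul hg.ennreal_ofReal.aemeasurable hg.ennreal_ofReal.aemeasurable
  -- I is finite and equals ofReal (∫ g)
  have hInn : (0:ℝ) ≤ ∫ x in Ioi (0:ℝ), g x :=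
    setIntegral_nonneg measurableSet_Ioi fun x _ => h0 x
  have hIeq : I = ENNReal.ofReal (∫ x in Ioi (0:ℝ), g x) :=
    (ofReal_integral_eq_lintegral_ofReal hint
      (Filter.Eventually.of_forall fun x => h0 x)).symm
  have hIfin : I ≠ ⊤ := by rw [hIeq]; exact ENNReal.ofReal_ne_top
  -- finish
  have hTnn : ∀ x : ℝ, 0 < x → Tgas g x = (h x).toReal := by
    intro x hx
    have h1 : 0 ≤ Tgas g x := by
      refine setIntegral_nonneg (measSx x) ?_
      rintro p ⟨h1, h2, h3⟩
      exact div_nonneg (mul_nonneg (h0 _) (h0 _)) (lt_trans hx h3).le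
    rw [← stepA x hx, ENNReal.toReal_ofReal h1]
  calc ∫ x in Ioi (0:ℝ), Tgas g x
      = ∫ x in Ioi (0:ℝ), (h x).toReal := by
        refine setIntegral_congr_fun measurableSet_Ioi ?_
        intro x hx
        exact hTnn x hx
    _ = (∫⁻ x in Ioi (0:ℝ), h x).toReal := by
        refine integral_toReal hhmeas.aemeasurable ?_
        have := hswap
        refine ae_lt_top hhmeas ?_
        rw [hswap]
        exact ENNReal.mul_ne_top hIfin hIfin
    _ = (∫ x in Ioi (0:ℝ), g x) ^ 2 := by
        rw [hswap, ENNReal.toReal_mul, hIeq, ENNReal.toReal_ofReal hInn, sq]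

/-- for every nonnegative integrable `y` on `[0,∞)`,
`‖Ty‖ = ‖y‖²`; in particular `‖y‖ = 1` implies `‖Ty‖ = 1`. -/
theorem norm_Top_eq_sq (y : ℝ → ℝ) (hy_nonneg : ∀ x, 0 ≤ y x)
    (hy_int : IntegrableOn y (Ioi 0)) :
    (∫ x in Ioi (0:ℝ), Tgas y x) = (∫ x in Ioi (0:ℝ), y x) ^ 2 ∧
    ((∫ x in Ioi (0:ℝ), y x) = 1 → (∫ x in Ioi (0:ℝ), Tgas y x) = 1) := by
  obtain ⟨g0, hg0m, hyg0⟩ := hy_int.1.aemeasurable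
  set g : ℝ → ℝ := fun t => max (g0 t) 0 with hgdef
  have hgm : Measurable g := hg0m.max measurable_const
  have hgnn : ∀ t, 0 ≤ g t := fun t => le_max_right _ _
  have hgy : y =ᵐ[volume.restrict (Ioi 0)] g := by
    filter_upwards [hyg0] with t ht
    rw [hgdef]
    simp only [← ht, max_eq_left (hy_nonneg t)]
  have hgint : IntegrableOn g (Ioi 0) := hy_int.congr hgy
  have hint_eq : (∫ x in Ioi (0:ℝ), y x) = ∫ x in Ioi (0:ℝ), g x := integral_congr_ae hgy
  -- ae equality on the quadrant
  have hfst : (fun p : ℝ × ℝ => y p.1)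
      =ᵐ[(volume.restrict (Ioi (0:ℝ))).prod (volume.restrict (Ioi (0:ℝ)))]
      fun p => g p.1 := Measure.quasiMeasurePreserving_fst.ae_eq_comp hgy
  have hsnd : (fun p : ℝ × ℝ => y p.2)
      =ᵐ[(volume.restrict (Ioi (0:ℝ))).prod (volume.restrict (Ioi (0:ℝ)))]
      fun p => g p.2 := Measure.quasiMeasurePreserving_snd.ae_eq_comp hgy
  have hQeq : (fun p : ℝ × ℝ => y p.1 * y p.2 / (p.1 + p.2))
      =ᵐ[(volume : Measure (ℝ × ℝ)).restrict (Ioi 0 ×ˢ Ioi 0)]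
      fun p => g p.1 * g p.2 / (p.1 + p.2) := by
    rw [restrictQ]
    filter_upwards [hfst, hsnd] with p h1 h2
    simp only [h1, h2]
  have hT : ∀ x : ℝ, Tgas y x = Tgas g x := by
    intro x
    refine integral_congr_ae ?_
    refine ae_restrict_of_ae_restrict_of_subset ?_ hQeq
    rintro p ⟨h1, h2, _⟩
    exact ⟨h1, h2⟩
  have hmain : (∫ x in Ioi (0:ℝ), Tgas y x) = (∫ x in Ioi (0:ℝ), y x) ^ 2 := by
    simp_rw [hT, hint_eq]
    exact main_meas g hgm hgnn hgint
  exact ⟨hmain, fun h1 => by rw [hmain, h1, one_pow]⟩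
end

section
/- The mean value is conserved by T: if y is a nonnegative integrable function on [0,∞) with ∫₀^∞ y(x) dx = 1 and ∫₀^∞ x y(x) dx < ∞, then ∫₀^∞ x (Ty)(x) dx = ∫₀^∞ x y(x) dx. -/
open MeasureTheory Set Real
open scoped ENNReal

noncomputable def gE (z : ℝ → ℝ) (t : ℝ) : ℝ≥0∞ := ENNReal.ofReal (z t)
noncomputable def fE (z : ℝ → ℝ) (p : ℝ × ℝ) : ℝ≥0∞ :=
  gE z p.1 * gE z p.2 / ENNReal.ofReal (p.1 + p.2)
def TS (x : ℝ) : Set (ℝ × ℝ) := {p | 0 < p.1 ∧ 0 < p.2 ∧ x < p.1 + p.2}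
noncomputable def L0 (z : ℝ → ℝ) (x : ℝ) : ℝ≥0∞ := ∫⁻ p, (TS x).indicator (fE z) p

lemma measurable_gE {z : ℝ → ℝ} (hz : Measurable z) : Measurable (gE z) :=
  ENNReal.measurable_ofReal.comp hz

lemma measurable_fE {z : ℝ → ℝ} (hz : Measurable z) : Measurable (fE z) :=
  (((measurable_gE hz).comp measurable_fst).mul ((measurable_gE hz).comp measurable_snd)).div
    (ENNReal.measurable_ofReal.comp (measurable_fst.add measurable_snd))

lemma measurableSet_TS (x : ℝ) : MeasurableSet (TS x) := by
  have : TS x = {p : ℝ × ℝ | 0 < p.1} ∩ ({p | 0 < p.2} ∩ {p | x < p.1 + p.2}) := by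
    ext p; simp [TS, and_assoc]
  rw [this]
  exact (measurableSet_lt measurable_const measurable_fst).inter
    ((measurableSet_lt measurable_const measurable_snd).inter
      (measurableSet_lt measurable_const (measurable_fst.add measurable_snd)))

lemma measurableSet_US : MeasurableSet {q : ℝ × ℝ × ℝ | q.2 ∈ TS q.1} := by
  have : {q : ℝ × ℝ × ℝ | q.2 ∈ TS q.1} =
      {q : ℝ × ℝ × ℝ | 0 < q.2.1} ∩ ({q | 0 < q.2.2} ∩ {q | q.1 < q.2.1 + q.2.2}) := by
    ext q; simp [TS, and_assoc]
  rw [this]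
  exact (measurableSet_lt measurable_const (measurable_fst.comp measurable_snd)).inter
    ((measurableSet_lt measurable_const (measurable_snd.comp measurable_snd)).inter
      (measurableSet_lt measurable_fst
        ((measurable_fst.comp measurable_snd).add (measurable_snd.comp measurable_snd))))

lemma indicator_TS_eq (z : ℝ → ℝ) (x : ℝ) (p : ℝ × ℝ) :
    (TS x).indicator (fE z) p =
      ({q : ℝ × ℝ × ℝ | q.2 ∈ TS q.1}.indicator (fun q => fE z q.2)) (x, p) := by
  by_cases h : p ∈ TS x
  · rw [Set.indicator_of_mem h, Set.indicator_of_mem (by exact h)]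
  · rw [Set.indicator_of_notMem h, Set.indicator_of_notMem (by exact h)]

lemma measurable_L0 {z : ℝ → ℝ} (hz : Measurable z) : Measurable (L0 z) := by
  have : L0 z = fun x => ∫⁻ p : ℝ × ℝ,
      ({q : ℝ × ℝ × ℝ | q.2 ∈ TS q.1}.indicator (fun q => fE z q.2)) (x, p) := by
    funext x; unfold L0; exact lintegral_congr fun p => indicator_TS_eq z x p
  rw [this]
  exact Measurable.lintegral_prod_right
    (f := fun x p => ({q : ℝ × ℝ × ℝ | q.2 ∈ TS q.1}.indicator (fun q => fE z q.2)) (x, p))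
    (((measurable_fE hz).comp measurable_snd).indicator measurableSet_US)

lemma lint_Ioo (s : ℝ) (hs : 0 ≤ s) :
    ∫⁻ x in Ioo (0:ℝ) s, ENNReal.ofReal x = ENNReal.ofReal (s^2/2) := by
  rw [← ofReal_integral_eq_lintegral_ofReal]
  · rw [← integral_Ioc_eq_integral_Ioo, ← intervalIntegral.integral_of_le hs, integral_id]
    norm_num
  · exact (intervalIntegral.intervalIntegrable_id (μ := volume) (a := 0) (b := s)).1.mono_set
      Ioo_subset_Ioc_self
  · exact Filter.Eventually.mono (ae_restrict_mem measurableSet_Ioo) (fun x hx => hx.1.le)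

lemma inner_eq {z : ℝ → ℝ} (p : ℝ × ℝ) :
    ∫⁻ x in Ioi (0:ℝ), ENNReal.ofReal x * (TS x).indicator (fE z) p =
      (Ioi (0:ℝ) ×ˢ Ioi (0:ℝ)).indicator
        (fun p => fE z p * ENNReal.ofReal ((p.1 + p.2)^2/2)) p := by
  by_cases hp : p ∈ Ioi (0:ℝ) ×ˢ Ioi (0:ℝ)
  · obtain ⟨hp1, hp2⟩ := Set.mem_prod.1 hp
    have hs : (0:ℝ) < p.1 + p.2 := add_pos hp1 hp2
    rw [Set.indicator_of_mem hp]
    have key : ∀ x : ℝ, ENNReal.ofReal x * (TS x).indicator (fE z) p =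
        (Iio (p.1 + p.2)).indicator (fun x => ENNReal.ofReal x * fE z p) x := by
      intro x
      by_cases hx : x < p.1 + p.2
      · rw [Set.indicator_of_mem (show p ∈ TS x from ⟨hp1, hp2, hx⟩),
          Set.indicator_of_mem (show x ∈ Iio (p.1 + p.2) from hx)]
      · rw [Set.indicator_of_notMem (show p ∉ TS x from fun h => hx h.2.2), mul_zero,
          Set.indicator_of_notMem (show x ∉ Iio (p.1 + p.2) from hx)]
    simp only [key]
    rw [lintegral_indicator measurableSet_Iio, Measure.restrict_restrict measurableSet_Iio,
      Set.Iio_inter_Ioi, lintegral_mul_const _ ENNReal.measurable_ofReal, lint_Ioo _ hs.le,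
      mul_comm]
  · rw [Set.indicator_of_notMem hp]
    have key : ∀ x : ℝ, ENNReal.ofReal x * (TS x).indicator (fE z) p = 0 := by
      intro x
      rw [Set.indicator_of_notMem
        (show p ∉ TS x from fun h => hp (Set.mem_prod.2 ⟨h.1, h.2.1⟩)), mul_zero]
    simp only [key, lintegral_zero]

lemma meas_half : Measurable fun t : ℝ => ENNReal.ofReal (t/2) :=
  ENNReal.measurable_ofReal.comp (measurable_id.div_const 2)

lemma prodcalc {z : ℝ → ℝ} (hz : Measurable z) (hz0 : ∀ t, 0 ≤ z t)
    (hz_int : IntegrableOn z (Ioi 0))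
    (hz_norm : (∫ x in Ioi (0:ℝ), z x) = 1)
    (hz_mean : IntegrableOn (fun x => x * z x) (Ioi 0)) :
    ∫⁻ p in Ioi (0:ℝ) ×ˢ Ioi (0:ℝ),
        gE z p.1 * gE z p.2 * ENNReal.ofReal ((p.1 + p.2)/2) ∂(volume : Measure (ℝ × ℝ)) =
      ENNReal.ofReal (∫ x in Ioi (0:ℝ), x * z x) := by
  set m := ∫ x in Ioi (0:ℝ), x * z x with hm
  have hm0 : 0 ≤ m :=
    setIntegral_nonneg measurableSet_Ioi fun x hx => mul_nonneg (le_of_lt hx) (hz0 x)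
  have hA : ∫⁻ t in Ioi (0:ℝ), gE z t = 1 := by
    rw [show gE z = fun t => ENNReal.ofReal (z t) from rfl,
      ← ofReal_integral_eq_lintegral_ofReal hz_int (Filter.Eventually.of_forall hz0),
      hz_norm, ENNReal.ofReal_one]
  have hB : ∫⁻ t in Ioi (0:ℝ), ENNReal.ofReal (t/2) * gE z t = ENNReal.ofReal (m/2) := by
    simp only [gE]
    rw [setLIntegral_congr_fun measurableSet_Ioi (
      (fun t (ht : t ∈ Ioi (0:ℝ)) =>
        (ENNReal.ofReal_mul (div_nonneg (le_of_lt ht) (by norm_num))).symm))]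
    rw [← ofReal_integral_eq_lintegral_ofReal]
    · congr 1
      rw [show (fun t => t/2 * z t) = fun t => (1/2) * (t * z t) by funext t; ring,
        integral_const_mul]
      rw [hm]; ring
    · have : (fun t => t/2 * z t) = fun t => (1/2) * (t * z t) := by funext t; ring
      rw [this]; exact hz_mean.const_mul _
    · filter_upwards [ae_restrict_mem measurableSet_Ioi] with t ht
      exact mul_nonneg (div_nonneg (le_of_lt ht) (by norm_num)) (hz0 t)
  have hInner : ∀ u ∈ Ioi (0:ℝ),
      (∫⁻ v in Ioi (0:ℝ), gE z u * gE z v * ENNReal.ofReal ((u + v)/2)) =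
        gE z u * ENNReal.ofReal (u/2) + gE z u * ENNReal.ofReal (m/2) := by
    intro u hu
    have e1 : ∀ v ∈ Ioi (0:ℝ), gE z u * gE z v * ENNReal.ofReal ((u + v)/2) =
        (gE z u * ENNReal.ofReal (u/2)) * gE z v +
          gE z u * (ENNReal.ofReal (v/2) * gE z v) := by
      intro v hv
      rw [show (u + v)/2 = u/2 + v/2 by ring,
        ENNReal.ofReal_add (div_nonneg (le_of_lt hu) two_pos.le)
          (div_nonneg (le_of_lt hv) two_pos.le)]
      ring
    rw [setLIntegral_congr_fun measurableSet_Ioi e1,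
      lintegral_add_left ((measurable_gE hz).const_mul _),
      lintegral_const_mul _ (measurable_gE hz), hA, mul_one,
      lintegral_const_mul' (gE z u) _ ENNReal.ofReal_ne_top, hB]
  have hmeas : Measurable fun p : ℝ × ℝ =>
      gE z p.1 * gE z p.2 * ENNReal.ofReal ((p.1 + p.2)/2) :=
    (((measurable_gE hz).comp measurable_fst).mul ((measurable_gE hz).comp measurable_snd)).mul
      (ENNReal.measurable_ofReal.comp ((measurable_fst.add measurable_snd).div_const 2))
  rw [show (volume : Measure (ℝ × ℝ)) = (volume : Measure ℝ).prod volume from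
      Measure.volume_eq_prod ℝ ℝ,
    ← Measure.prod_restrict, lintegral_prod _ hmeas.aemeasurable,
    setLIntegral_congr_fun measurableSet_Ioi hInner,
    lintegral_add_left (f := fun u => gE z u * ENNReal.ofReal (u/2)) ((measurable_gE hz).mul meas_half),
    lintegral_congr (fun u => mul_comm (gE z u) (ENNReal.ofReal (u/2))), hB,
    lintegral_mul_const _ (measurable_gE hz), hA, one_mul,
    ← ENNReal.ofReal_add (div_nonneg hm0 two_pos.le) (div_nonneg hm0 two_pos.le)]
  congr 1
  ring

lemma J_eq {z : ℝ → ℝ} (hz : Measurable z) (hz0 : ∀ t, 0 ≤ z t)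
    (hz_int : IntegrableOn z (Ioi 0))
    (hz_norm : (∫ x in Ioi (0:ℝ), z x) = 1)
    (hz_mean : IntegrableOn (fun x => x * z x) (Ioi 0)) :
    ∫⁻ x in Ioi (0:ℝ), ENNReal.ofReal x * L0 z x =
      ENNReal.ofReal (∫ x in Ioi (0:ℝ), x * z x) := by
  have step1 : ∀ x, ENNReal.ofReal x * L0 z x =
      ∫⁻ p : ℝ × ℝ, ENNReal.ofReal x * (TS x).indicator (fE z) p :=
    fun x => (lintegral_const_mul' _ _ ENNReal.ofReal_ne_top).symm
  rw [lintegral_congr step1]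
  have hunc : Function.uncurry (fun x (p : ℝ × ℝ) =>
      ENNReal.ofReal x * (TS x).indicator (fE z) p) =
      fun q : ℝ × ℝ × ℝ => ENNReal.ofReal q.1 *
        ({q : ℝ × ℝ × ℝ | q.2 ∈ TS q.1}).indicator (fun q => fE z q.2) q := by
    funext q
    simp only [Function.uncurry]
    rw [indicator_TS_eq]
  have hswap := lintegral_lintegral_swap (μ := volume.restrict (Ioi (0:ℝ)))
    (ν := (volume : Measure (ℝ × ℝ)))
    (f := fun x (p : ℝ × ℝ) => ENNReal.ofReal x * (TS x).indicator (fE z) p)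
    (by rw [hunc]
        exact ((ENNReal.measurable_ofReal.comp measurable_fst).mul
          (((measurable_fE hz).comp measurable_snd).indicator measurableSet_US)).aemeasurable)
  rw [hswap, lintegral_congr (fun p => inner_eq (z := z) p),
    lintegral_indicator (measurableSet_Ioi.prod measurableSet_Ioi),
    setLIntegral_congr_fun (measurableSet_Ioi.prod measurableSet_Ioi)
      (fun p hp => ?_),
    prodcalc hz hz0 hz_int hz_norm hz_mean]
  obtain ⟨hp1, hp2⟩ := Set.mem_prod.1 hp
  have hs : (0:ℝ) < p.1 + p.2 := add_pos hp1 hp2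
  show fE z p * ENNReal.ofReal ((p.1 + p.2)^2/2) = _
  rw [show (p.1 + p.2)^2/2 = (p.1 + p.2) * ((p.1 + p.2)/2) by ring,
    ENNReal.ofReal_mul hs.le, fE, ← mul_assoc,
    ENNReal.div_mul_cancel (by simpa using hs) ENNReal.ofReal_ne_top]

lemma Tgas_eq {z : ℝ → ℝ} (hz : Measurable z) (hz0 : ∀ t, 0 ≤ z t) (x : ℝ) :
    Tgas z x = (L0 z x).toReal := by
  show (∫ p in TS x, z p.1 * z p.2 / (p.1 + p.2)) = _
  have key := integral_eq_lintegral_of_nonneg_ae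
    (f := fun p : ℝ × ℝ => z p.1 * z p.2 / (p.1 + p.2))
    (μ := volume.restrict (TS x))
    (by filter_upwards [ae_restrict_mem (measurableSet_TS x)] with p hp
        exact div_nonneg (mul_nonneg (hz0 _) (hz0 _)) (add_pos hp.1 hp.2.1).le)
    (by exact (((hz.comp measurable_fst).mul (hz.comp measurable_snd)).div
      (measurable_fst.add measurable_snd)).aestronglyMeasurable)
  rw [key, L0, lintegral_indicator (measurableSet_TS x)]
  congr 1
  refine setLIntegral_congr_fun (measurableSet_TS x)
    (fun p hp => ?_)
  rw [ENNReal.ofReal_div_of_pos (add_pos hp.1 hp.2.1), ENNReal.ofReal_mul (hz0 _)]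
  rfl

theorem main_meas_s1 {z : ℝ → ℝ} (hz : Measurable z) (hz0 : ∀ t, 0 ≤ z t)
    (hz_int : IntegrableOn z (Ioi 0))
    (hz_norm : (∫ x in Ioi (0:ℝ), z x) = 1)
    (hz_mean : IntegrableOn (fun x => x * z x) (Ioi 0)) :
    (∫ x in Ioi (0:ℝ), x * Tgas z x) = ∫ x in Ioi (0:ℝ), x * z x := by
  have hm0 : 0 ≤ ∫ x in Ioi (0:ℝ), x * z x :=
    setIntegral_nonneg measurableSet_Ioi fun x hx => mul_nonneg (le_of_lt hx) (hz0 x)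
  have hJ := J_eq hz hz0 hz_int hz_norm hz_mean
  have hfin : ∀ᵐ x ∂(volume.restrict (Ioi (0:ℝ))), ENNReal.ofReal x * L0 z x < ⊤ :=
    ae_lt_top (ENNReal.measurable_ofReal.mul (measurable_L0 hz))
      (by rw [hJ]; exact ENNReal.ofReal_ne_top)
  have hfun : (fun x => x * Tgas z x) = fun x => x * (L0 z x).toReal :=
    funext fun x => by rw [Tgas_eq hz hz0 x]
  have key := integral_eq_lintegral_of_nonneg_ae
    (f := fun x => x * (L0 z x).toReal)
    (μ := volume.restrict (Ioi (0:ℝ)))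
    (by filter_upwards [ae_restrict_mem measurableSet_Ioi] with x hx
        exact mul_nonneg (le_of_lt hx) ENNReal.toReal_nonneg)
    (by exact (measurable_id.mul ((measurable_L0 hz).ennreal_toReal)).aestronglyMeasurable)
  rw [hfun, key]
  have hcongr : ∫⁻ x in Ioi (0:ℝ), ENNReal.ofReal (x * (L0 z x).toReal) =
      ∫⁻ x in Ioi (0:ℝ), ENNReal.ofReal x * L0 z x := by
    refine lintegral_congr_ae ?_
    filter_upwards [hfin, ae_restrict_mem measurableSet_Ioi] with x hfx hx
    have hne : L0 z x ≠ ⊤ := fun h => hfx.ne (by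
      rw [h, ENNReal.mul_top (ENNReal.ofReal_pos.2 hx).ne'])
    rw [ENNReal.ofReal_mul (le_of_lt hx), ENNReal.ofReal_toReal hne]
  rw [hcongr, hJ, ENNReal.toReal_ofReal hm0]
/-- the mean value is conserved by `T`. -/
theorem mean_Tgas_eq (y : ℝ → ℝ) (hy_nonneg : ∀ x, 0 ≤ y x)
    (hy_int : IntegrableOn y (Ioi 0))
    (hy_norm : (∫ x in Ioi (0:ℝ), y x) = 1)
    (hy_mean : IntegrableOn (fun x => x * y x) (Ioi 0)) :
    (∫ x in Ioi (0:ℝ), x * Tgas y x) = ∫ x in Ioi (0:ℝ), x * y x := by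
  set w := hy_int.1.mk y with hw_def
  set z : ℝ → ℝ := fun t => max (w t) 0 with hz_def
  have hz : Measurable z := (hy_int.1.stronglyMeasurable_mk.measurable).max measurable_const
  have hz0 : ∀ t, 0 ≤ z t := fun t => le_max_right _ _
  have hyz : y =ᵐ[volume.restrict (Ioi (0:ℝ))] z := by
    filter_upwards [hy_int.1.ae_eq_mk] with t ht
    show y t = max (w t) 0
    rw [hw_def, ← ht]
    exact (max_eq_left (hy_nonneg t)).symm
  have hz_int : IntegrableOn z (Ioi 0) := hy_int.congr hyz
  have hz_norm : (∫ x in Ioi (0:ℝ), z x) = 1 := by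
    rw [← integral_congr_ae hyz]; exact hy_norm
  have hmean_eq : (fun x => x * y x) =ᵐ[volume.restrict (Ioi (0:ℝ))] fun x => x * z x := by
    filter_upwards [hyz] with t ht; rw [ht]
  have hz_mean : IntegrableOn (fun x => x * z x) (Ioi 0) := hy_mean.congr hmean_eq
  -- null sets
  have hae : ∀ᵐ t ∂(volume : Measure ℝ), t ∈ Ioi (0:ℝ) → y t = z t :=
    (ae_restrict_iff' measurableSet_Ioi).1 hyz
  obtain ⟨D, hED, hDmeas, hD0⟩ := exists_measurable_superset_of_null hae
  have hD2 : (volume : Measure (ℝ × ℝ)) (D ×ˢ (univ : Set ℝ) ∪ (univ : Set ℝ) ×ˢ D) = 0 := by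
    refine measure_union_null ?_ ?_ <;>
      rw [show (volume : Measure (ℝ × ℝ)) = (volume : Measure ℝ).prod volume from
        Measure.volume_eq_prod ℝ ℝ, Measure.prod_prod] <;>
      simp [hD0]
  have hae2 : ∀ᵐ p ∂(volume : Measure (ℝ × ℝ)), p.1 ∉ D ∧ p.2 ∉ D := by
    rw [Filter.eventually_iff, mem_ae_iff]
    refine measure_mono_null (fun p hp => ?_) hD2
    simp only [mem_compl_iff, mem_setOf_eq, not_and_or, not_not] at hp
    rcases hp with h | h
    · exact Or.inl ⟨h, mem_univ _⟩
    · exact Or.inr ⟨mem_univ _, h⟩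
  have hTgas : ∀ x, Tgas y x = Tgas z x := by
    intro x
    refine setIntegral_congr_ae (measurableSet_TS x) ?_
    filter_upwards [hae2] with p hp hmem
    have h1 : y p.1 = z p.1 := by
      by_contra hc
      exact hp.1 (hED fun hcontra => hc (hcontra hmem.1))
    have h2 : y p.2 = z p.2 := by
      by_contra hc
      exact hp.2 (hED fun hcontra => hc (hcontra hmem.2.1))
    rw [h1, h2]
  simp only [hTgas]
  rw [main_meas_s1 hz hz0 hz_int hz_norm hz_mean, ← integral_congr_ae hmean_eq]
end

section
/- For every α > 0, the exponential density y_α(x) = α e^{−αx} is a fixed point of T: for all x ≥ 0, ∬_{{(u,v) : u,v>0, u+v>x}} y_α(u) y_α(v)/(u+v) du dv = α e^{−αx}. -/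
open MeasureTheory Set Real

private lemma aux_lintegral (α : ℝ) (hα : 0 < α) (x : ℝ) (hx : 0 ≤ x) :
    ∫⁻ p in {p : ℝ × ℝ | 0 < p.1 ∧ 0 < p.2 ∧ x < p.1 + p.2},
      ENNReal.ofReal (α * exp (-α * p.1) * (α * exp (-α * p.2)) / (p.1 + p.2))
      = ENNReal.ofReal (α * exp (-α * x)) := by
  set S : Set (ℝ × ℝ) := {p : ℝ × ℝ | 0 < p.1 ∧ 0 < p.2 ∧ x < p.1 + p.2} with hS
  have hSm : MeasurableSet S := by
    apply MeasurableSet.inter (measurableSet_lt measurable_const measurable_fst)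
    exact MeasurableSet.inter (measurableSet_lt measurable_const measurable_snd)
      (measurableSet_lt measurable_const (measurable_fst.add measurable_snd))
  set F : ℝ × ℝ → ENNReal := fun p =>
      ENNReal.ofReal (α * exp (-α * p.1) * (α * exp (-α * p.2)) / (p.1 + p.2)) with hF
  have hFm : Measurable F := by
    apply ENNReal.measurable_ofReal.comp
    fun_prop
  set T : Set (ℝ × ℝ) := {z : ℝ × ℝ | 0 < z.2 ∧ z.2 < z.1 ∧ x < z.1} with hT
  have hTm : MeasurableSet T := by
    apply MeasurableSet.inter (measurableSet_lt measurable_const measurable_snd)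
    exact MeasurableSet.inter (measurableSet_lt measurable_snd measurable_fst)
      (measurableSet_lt measurable_const measurable_fst)
  set G : ℝ × ℝ → ENNReal := fun z => ENNReal.ofReal (α ^ 2 * exp (-α * z.1) / z.1) with hG
  have hGm : Measurable (T.indicator G) := by
    apply Measurable.indicator _ hTm
    apply ENNReal.measurable_ofReal.comp
    fun_prop
  have key : ∀ z : ℝ × ℝ, S.indicator F (z.2, z.1 - z.2) = T.indicator G z := by
    intro z
    by_cases h : z ∈ T
    · obtain ⟨h1, h2, h3⟩ := h
      have hmem : (z.2, z.1 - z.2) ∈ S := by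
        refine ⟨h1, by simpa using h2, by simpa using h3⟩
      rw [indicator_of_mem hmem, indicator_of_mem (show z ∈ T from ⟨h1, h2, h3⟩)]
      simp only [hF, hG]
      congr 1
      have : α * exp (-α * z.2) * (α * exp (-α * (z.1 - z.2))) = α ^ 2 * exp (-α * z.1) := by
        rw [show α * exp (-α * z.2) * (α * exp (-α * (z.1 - z.2)))
            = α ^ 2 * (exp (-α * z.2) * exp (-α * (z.1 - z.2))) by ring, ← Real.exp_add]
        ring_nf
      rw [this]
      congr 1
      ring
    · have hnmem : (z.2, z.1 - z.2) ∉ S := by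
        intro hc
        exact h ⟨hc.1, by simpa using hc.2.1, by simpa using hc.2.2⟩
      rw [indicator_of_notMem hnmem, indicator_of_notMem h]
  calc ∫⁻ p in S, F p = ∫⁻ p, S.indicator F p := (lintegral_indicator hSm F).symm
    _ = ∫⁻ p, S.indicator F p ∂((volume : Measure ℝ).prod volume) := by
        rw [← Measure.volume_eq_prod]
    _ = ∫⁻ z, S.indicator F (z.2, z.1 - z.2) ∂((volume : Measure ℝ).prod volume) := by
        exact ((measurePreserving_prod_sub_swap (volume : Measure ℝ) volume).lintegral_comp
          (hFm.indicator hSm)).symm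
    _ = ∫⁻ z, T.indicator G z ∂((volume : Measure ℝ).prod volume) := by
        simp_rw [key]
    _ = ∫⁻ s, ∫⁻ u, T.indicator G (s, u) := lintegral_prod _ hGm.aemeasurable
    _ = ∫⁻ s, (Ioi x).indicator (fun s => ENNReal.ofReal (α ^ 2 * exp (-α * s))) s := by
        congr 1; ext s
        by_cases hs : x < s
        · have hs0 : 0 < s := lt_of_le_of_lt hx hs
          have : ∀ u : ℝ, T.indicator G (s, u)
              = (Ioo 0 s).indicator (fun _ => ENNReal.ofReal (α ^ 2 * exp (-α * s) / s)) u := by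
            intro u
            by_cases hu : u ∈ Ioo 0 s
            · rw [indicator_of_mem hu,
                indicator_of_mem (show (s,u) ∈ T from ⟨hu.1, hu.2, hs⟩)]
            · rw [indicator_of_notMem hu, indicator_of_notMem]
              intro hc
              exact hu ⟨hc.1, hc.2.1⟩
          simp_rw [this]
          rw [lintegral_indicator measurableSet_Ioo, setLIntegral_const,
            indicator_of_mem (mem_Ioi.mpr hs), Real.volume_Ioo, sub_zero,
            ← ENNReal.ofReal_mul (by positivity), div_mul_cancel₀ _ hs0.ne']
        · have : ∀ u : ℝ, T.indicator G (s, u) = 0 := by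
            intro u
            apply indicator_of_notMem
            intro hc
            exact hs hc.2.2
          simp_rw [this]
          rw [lintegral_zero, indicator_of_notMem (by simpa using hs)]
    _ = ∫⁻ s in Ioi x, ENNReal.ofReal (α ^ 2 * exp (-α * s)) :=
        lintegral_indicator measurableSet_Ioi _
    _ = ENNReal.ofReal (∫ s in Ioi x, α ^ 2 * exp (-α * s)) := by
        rw [ofReal_integral_eq_lintegral_ofReal]
        · exact (Integrable.const_mul (exp_neg_integrableOn_Ioi x hα) _)
        · filter_upwards with s
          positivity
    _ = ENNReal.ofReal (α * exp (-α * x)) := by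
        congr 1
        rw [MeasureTheory.integral_const_mul]
        have : ∫ s in Ioi x, exp (-α * s) = α⁻¹ • ∫ t in Ioi (α * x), exp (-t) := by
          rw [← integral_comp_mul_left_Ioi (fun t => exp (-t)) x hα]
          simp [neg_mul]
        rw [this, integral_exp_neg_Ioi, smul_eq_mul]
        rw [neg_mul]
        field_simp

/-- for every `α > 0`, the exponential density `α e^{-αx}`
is a fixed point of `T` on `[0,∞)`. -/
theorem exp_fixed_point_Tgas (α : ℝ) (hα : 0 < α) :
    ∀ x : ℝ, 0 ≤ x → Tgas (fun t => α * exp (-α * t)) x = α * exp (-α * x) := by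
  intro x hx
  unfold Tgas
  simp only
  set S : Set (ℝ × ℝ) := {p : ℝ × ℝ | 0 < p.1 ∧ 0 < p.2 ∧ x < p.1 + p.2} with hS
  have hSm : MeasurableSet S := by
    apply MeasurableSet.inter (measurableSet_lt measurable_const measurable_fst)
    exact MeasurableSet.inter (measurableSet_lt measurable_const measurable_snd)
      (measurableSet_lt measurable_const (measurable_fst.add measurable_snd))
  have hnn : 0 ≤ᵐ[volume.restrict S]
      fun p : ℝ × ℝ => α * exp (-α * p.1) * (α * exp (-α * p.2)) / (p.1 + p.2) := by
    refine (ae_restrict_iff' hSm).mpr ?_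
    filter_upwards with p hp
    have h1 : (0:ℝ) < p.1 + p.2 := add_pos hp.1 hp.2.1
    positivity
  have hmeas : AEStronglyMeasurable
      (fun p : ℝ × ℝ => α * exp (-α * p.1) * (α * exp (-α * p.2)) / (p.1 + p.2))
      (volume.restrict S) := by
    apply Measurable.aestronglyMeasurable
    fun_prop
  rw [integral_eq_lintegral_of_nonneg_ae hnn hmeas, aux_lintegral α hα x hx,
    ENNReal.toReal_ofReal (by positivity)]
end

section
/- For every λ ∈ [0,1], the operator T_λ conserves the mean value: if y is a nonnegative integrable function on [0,∞) with ∫₀^∞ y(x) dx = 1 and ∫₀^∞ x y(x) dx < ∞, then ∫₀^∞ x (T_λ y)(x) dx = ∫₀^∞ x y(x) dx. -/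
open MeasureTheory Set Real
open scoped ENNReal

/-- The gas-like operator with effectiveness parameter `λ`:
`(T_λ y)(x) = (1 - λ) y(x) + λ (Ty)(x)`. -/
noncomputable def Tlam (l : ℝ) (y : ℝ → ℝ) : ℝ → ℝ :=
  fun x => (1 - l) * y x + l * Tgas y x

namespace MeanTlamAux

noncomputable def Fk (Y : ℝ → ℝ) : ℝ × ℝ → ℝ≥0∞ :=
  fun p => ENNReal.ofReal (Y p.1 * Y p.2 / (p.1 + p.2))

def Sx (x : ℝ) : Set (ℝ × ℝ) := {p | 0 < p.1 ∧ 0 < p.2 ∧ x < p.1 + p.2}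

noncomputable def Jx (Y : ℝ → ℝ) (x : ℝ) : ℝ≥0∞ := ∫⁻ p in Sx x, Fk Y p

def Aset : Set (ℝ × (ℝ × ℝ)) := {q | 0 < q.2.1 ∧ 0 < q.2.2 ∧ q.1 < q.2.1 + q.2.2}

noncomputable def Gk (Y : ℝ → ℝ) : ℝ × (ℝ × ℝ) → ℝ≥0∞ :=
  fun q => ENNReal.ofReal q.1 * Aset.indicator (fun q => Fk Y q.2) q

lemma Sx_meas (x : ℝ) : MeasurableSet (Sx x) := by
  have : Sx x = {p : ℝ × ℝ | 0 < p.1} ∩ ({p | 0 < p.2} ∩ {p | x < p.1 + p.2}) := rfl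
  rw [this]
  exact (measurableSet_lt measurable_const measurable_fst).inter
    ((measurableSet_lt measurable_const measurable_snd).inter
      (measurableSet_lt measurable_const (measurable_fst.add measurable_snd)))

lemma Aset_meas : MeasurableSet Aset := by
  have : Aset = {q : ℝ × (ℝ × ℝ) | 0 < q.2.1} ∩
      ({q | 0 < q.2.2} ∩ {q | q.1 < q.2.1 + q.2.2}) := rfl
  rw [this]
  exact (measurableSet_lt measurable_const (measurable_fst.comp measurable_snd)).inter
    ((measurableSet_lt measurable_const (measurable_snd.comp measurable_snd)).inter
      (measurableSet_lt measurable_fst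
        ((measurable_fst.comp measurable_snd).add (measurable_snd.comp measurable_snd))))

lemma Fk_meas {Y : ℝ → ℝ} (hm : Measurable Y) : Measurable (Fk Y) :=
  (((hm.comp measurable_fst).mul (hm.comp measurable_snd)).div
    (measurable_fst.add measurable_snd)).ennreal_ofReal

lemma Gk_meas {Y : ℝ → ℝ} (hm : Measurable Y) : Measurable (Gk Y) :=
  (measurable_fst.ennreal_ofReal).mul
    (((Fk_meas hm).comp measurable_snd).indicator Aset_meas)

lemma Jx_eq {Y : ℝ → ℝ} (x : ℝ) :
    Jx Y x = ∫⁻ p, Aset.indicator (fun q => Fk Y q.2) (x, p) := by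
  rw [Jx, ← lintegral_indicator (Sx_meas x)]
  congr 1

lemma Jx_meas {Y : ℝ → ℝ} (hm : Measurable Y) : Measurable (Jx Y) := by
  rw [show Jx Y = fun x => ∫⁻ p, Aset.indicator (fun q => Fk Y q.2) (x, p) from
    funext fun x => Jx_eq x]
  exact (((Fk_meas hm).comp measurable_snd).indicator Aset_meas).lintegral_prod_right'

lemma lint_id {s : ℝ} (hs : 0 < s) :
    ∫⁻ x in Ioo (0 : ℝ) s, ENNReal.ofReal x = ENNReal.ofReal (s ^ 2 / 2) := by
  rw [setLIntegral_congr Ioo_ae_eq_Ioc]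
  have hint : IntegrableOn (fun x : ℝ => x) (Ioc 0 s) :=
    (continuous_id.continuousOn.integrableOn_Icc).mono_set Ioc_subset_Icc_self
  rw [← ofReal_integral_eq_lintegral_ofReal hint
    ((ae_restrict_iff' measurableSet_Ioc).2 (ae_of_all _ fun x hx => hx.1.le))]
  congr 1
  rw [← intervalIntegral.integral_of_le hs.le, integral_id]
  ring

theorem key (Y : ℝ → ℝ) (hm : Measurable Y) (h0 : ∀ t, 0 ≤ Y t)
    (hint : IntegrableOn Y (Ioi 0))
    (hnorm : (∫ x in Ioi (0 : ℝ), Y x) = 1)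
    (hmean : IntegrableOn (fun x => x * Y x) (Ioi 0)) :
    IntegrableOn (fun x => x * Tgas Y x) (Ioi 0) ∧
      (∫ x in Ioi (0 : ℝ), x * Tgas Y x) = ∫ x in Ioi (0 : ℝ), x * Y x := by
  set μ0 : Measure ℝ := volume.restrict (Ioi 0) with hμ0
  have hMnn : 0 ≤ ∫ x, x * Y x ∂μ0 :=
    setIntegral_nonneg measurableSet_Ioi fun x hx => mul_nonneg (le_of_lt hx) (h0 x)
  -- the big triple lower integral
  set I : ℝ≥0∞ := ∫⁻ q, Gk Y q ∂(μ0.prod volume) with hI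
  -- Step 1 : I as an iterated integral in x first
  have step1 : I = ∫⁻ x, ENNReal.ofReal x * Jx Y x ∂μ0 := by
    rw [hI, lintegral_prod _ (Gk_meas hm).aemeasurable]
    refine lintegral_congr fun x => ?_
    rw [Jx_eq, ← lintegral_const_mul (ENNReal.ofReal x)
      (show Measurable fun p : ℝ × ℝ => Aset.indicator (fun q => Fk Y q.2) (x, p) from
        (((Fk_meas hm).comp measurable_snd).indicator Aset_meas).comp measurable_prodMk_left)]
    rfl
  -- Step 2 : swap and compute the inner integral in x
  have inner : ∀ p : ℝ × ℝ, (∫⁻ x, Gk Y (x, p) ∂μ0) =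
      Set.indicator (Ioi 0 ×ˢ Ioi 0)
        (fun p : ℝ × ℝ => ENNReal.ofReal (Y p.1 * Y p.2 * (p.1 + p.2) / 2)) p := by
    intro p
    by_cases h1 : 0 < p.1
    · by_cases h2 : 0 < p.2
      · set s : ℝ := p.1 + p.2 with hsdef
        have hs : 0 < s := add_pos h1 h2
        have hrep : (fun x => Gk Y (x, p)) =
            (Iio s).indicator (fun x => ENNReal.ofReal x * Fk Y p) := by
          funext x
          by_cases hx : x < s
          · simp [Gk, Aset, Set.indicator, h1, h2, hx, Set.mem_setOf_eq]
            intro h; linarith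
          · simp [Gk, Aset, Set.indicator, h1, h2, hx, Set.mem_setOf_eq]
            intro h; exact (hx (by linarith)).elim
        rw [hrep]
        rw [lintegral_indicator measurableSet_Iio]
        rw [hμ0, Measure.restrict_restrict measurableSet_Iio, Set.Iio_inter_Ioi,
          Set.indicator_of_mem (by exact ⟨h1, h2⟩ : p ∈ Ioi 0 ×ˢ Ioi 0)]
        rw [lintegral_mul_const _ ENNReal.measurable_ofReal, lint_id hs]
        rw [Fk, ← ENNReal.ofReal_mul (by positivity : (0:ℝ) ≤ s ^ 2 / 2)]
        congr 1
        field_simp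
        ring
      · have hmem : p ∉ Ioi 0 ×ˢ Ioi 0 := fun h => h2 h.2
        rw [Set.indicator_of_notMem hmem]
        have : ∀ x : ℝ, Gk Y (x, p) = 0 := by
          intro x
          have : (x, p) ∉ Aset := fun h => h2 h.2.1
          simp [Gk, Set.indicator_of_notMem this]
        simp [this]
    · have hmem : p ∉ Ioi 0 ×ˢ Ioi 0 := fun h => h1 h.1
      rw [Set.indicator_of_notMem hmem]
      have : ∀ x : ℝ, Gk Y (x, p) = 0 := by
        intro x
        have : (x, p) ∉ Aset := fun h => h1 h.1
        simp [Gk, Set.indicator_of_notMem this]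
      simp [this]
  have step2 : I = ∫⁻ p in Ioi 0 ×ˢ Ioi 0,
      ENNReal.ofReal (Y p.1 * Y p.2 * (p.1 + p.2) / 2) := by
    rw [hI, lintegral_prod_symm _ (Gk_meas hm).aemeasurable]
    rw [← lintegral_indicator (measurableSet_Ioi.prod measurableSet_Ioi)]
    exact lintegral_congr inner
  -- Step 3 : compute the double integral
  have hmeas_eq : (volume : Measure (ℝ × ℝ)).restrict (Ioi 0 ×ˢ Ioi 0) = μ0.prod μ0 := by
    rw [hμ0, Measure.prod_restrict, ← Measure.volume_eq_prod]
  have hint1 : Integrable (fun p : ℝ × ℝ => (p.1 * Y p.1) * Y p.2) (μ0.prod μ0) := by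
    simpa using hmean.mul_prod hint
  have hint2 : Integrable (fun p : ℝ × ℝ => Y p.1 * (p.2 * Y p.2)) (μ0.prod μ0) := by
    simpa using hint.mul_prod hmean
  have hrw : (fun p : ℝ × ℝ => Y p.1 * Y p.2 * (p.1 + p.2) / 2) =
      fun p : ℝ × ℝ => (1 / 2) * ((p.1 * Y p.1) * Y p.2) +
        (1 / 2) * (Y p.1 * (p.2 * Y p.2)) := by
    funext p; ring
  have hHint : IntegrableOn (fun p : ℝ × ℝ => Y p.1 * Y p.2 * (p.1 + p.2) / 2)
      (Ioi 0 ×ˢ Ioi 0) := by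
    rw [IntegrableOn, hmeas_eq, hrw]
    exact (hint1.const_mul _).add (hint2.const_mul _)
  have hHnn : 0 ≤ᵐ[(volume : Measure (ℝ × ℝ)).restrict (Ioi 0 ×ˢ Ioi 0)]
      fun p : ℝ × ℝ => Y p.1 * Y p.2 * (p.1 + p.2) / 2 := by
    refine (ae_restrict_iff' (measurableSet_Ioi.prod measurableSet_Ioi)).2
      (ae_of_all _ fun p hp => ?_)
    have h1 : (0:ℝ) < p.1 := hp.1
    have h2 : (0:ℝ) < p.2 := hp.2
    exact div_nonneg (mul_nonneg (mul_nonneg (h0 _) (h0 _)) (by linarith)) (by norm_num)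
  have e1 : (∫ p : ℝ × ℝ, (p.1 * Y p.1) * Y p.2 ∂(μ0.prod μ0)) =
      (∫ x, x * Y x ∂μ0) * ∫ x, Y x ∂μ0 := by
    simpa using integral_prod_mul (μ := μ0) (ν := μ0) (fun u => u * Y u) Y
  have e2 : (∫ p : ℝ × ℝ, Y p.1 * (p.2 * Y p.2) ∂(μ0.prod μ0)) =
      (∫ x, Y x ∂μ0) * ∫ x, x * Y x ∂μ0 := by
    simpa using integral_prod_mul (μ := μ0) (ν := μ0) Y (fun u => u * Y u)
  have hHval : (∫ p in Ioi 0 ×ˢ Ioi 0, Y p.1 * Y p.2 * (p.1 + p.2) / 2) =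
      ∫ x, x * Y x ∂μ0 := by
    rw [show (∫ p in Ioi 0 ×ˢ Ioi 0, Y p.1 * Y p.2 * (p.1 + p.2) / 2) =
        ∫ p : ℝ × ℝ, Y p.1 * Y p.2 * (p.1 + p.2) / 2 ∂(μ0.prod μ0) by rw [← hmeas_eq]]
    rw [hrw, integral_add (hint1.const_mul _) (hint2.const_mul _),
      integral_const_mul, integral_const_mul, e1, e2, hnorm]
    ring
  have hIval : I = ENNReal.ofReal (∫ x, x * Y x ∂μ0) := by
    rw [step2, ← ofReal_integral_eq_lintegral_ofReal hHint hHnn, hHval]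
  have hItop : I ≠ ⊤ := by rw [hIval]; exact ENNReal.ofReal_ne_top
  -- Step 4 : back to the Bochner integral
  have hTg : ∀ x, Tgas Y x = (Jx Y x).toReal := by
    intro x
    rw [Tgas, show {p : ℝ × ℝ | 0 < p.1 ∧ 0 < p.2 ∧ x < p.1 + p.2} = Sx x from rfl,
      integral_eq_lintegral_of_nonneg_ae (f := fun p : ℝ × ℝ => Y p.1 * Y p.2 / (p.1 + p.2))
      ((ae_restrict_iff' (Sx_meas x)).2 (ae_of_all _ fun p hp =>
        div_nonneg (mul_nonneg (h0 _) (h0 _)) (add_pos hp.1 hp.2.1).le))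
      ((((hm.comp measurable_fst).mul (hm.comp measurable_snd)).div
        (measurable_fst.add measurable_snd)).aestronglyMeasurable)]
    rfl
  have hprodmeas : Measurable fun x => ENNReal.ofReal x * Jx Y x :=
    measurable_id.ennreal_ofReal.mul (Jx_meas hm)
  have hae : ∀ᵐ x ∂μ0, ENNReal.ofReal x * Jx Y x < ⊤ := by
    refine ae_lt_top hprodmeas ?_
    rw [← step1]; exact hItop
  have haeeq : (fun x => x * Tgas Y x) =ᵐ[μ0]
      fun x => (ENNReal.ofReal x * Jx Y x).toReal := by
    filter_upwards [hae, ae_restrict_mem measurableSet_Ioi] with x hx hx0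
    have hJx : Jx Y x ≠ ⊤ := by
      intro h
      rw [h, ENNReal.mul_top (by simp [ENNReal.ofReal_eq_zero, not_le.2 (mem_Ioi.1 hx0), mem_Ioi.1 hx0])] at hx
      exact (lt_irrefl _ hx).elim
    rw [hTg x, ENNReal.toReal_mul, ENNReal.toReal_ofReal (le_of_lt hx0)]
  have hψm : Measurable fun x => (ENNReal.ofReal x * Jx Y x).toReal :=
    hprodmeas.ennreal_toReal
  have hψlint : (∫⁻ x, ENNReal.ofReal ((ENNReal.ofReal x * Jx Y x).toReal) ∂μ0) = I := by
    rw [step1]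
    refine lintegral_congr_ae ?_
    filter_upwards [hae] with x hx
    rw [ENNReal.ofReal_toReal hx.ne]
  have hψint : Integrable (fun x => (ENNReal.ofReal x * Jx Y x).toReal) μ0 := by
    refine ⟨hψm.aestronglyMeasurable, ?_⟩
    rw [hasFiniteIntegral_iff_ofReal (ae_of_all _ fun x => ENNReal.toReal_nonneg)]
    rw [hψlint]
    exact lt_top_iff_ne_top.2 hItop
  constructor
  · exact hψint.congr haeeq.symm
  · rw [show (∫ x in Ioi (0:ℝ), x * Tgas Y x) = ∫ x, x * Tgas Y x ∂μ0 from rfl,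
      integral_congr_ae haeeq,
      integral_eq_lintegral_of_nonneg_ae (ae_of_all _ fun x => ENNReal.toReal_nonneg)
        hψm.aestronglyMeasurable,
      hψlint, hIval, ENNReal.toReal_ofReal hMnn]

end MeanTlamAux

/-- for every `λ ∈ [0,1]`, `T_λ` conserves the mean value. -/
theorem mean_Tlam_eq (l : ℝ) (hl : l ∈ Icc (0:ℝ) 1)
    (y : ℝ → ℝ) (hy_nonneg : ∀ x, 0 ≤ y x)
    (hy_int : IntegrableOn y (Ioi 0))
    (hy_norm : (∫ x in Ioi (0:ℝ), y x) = 1)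
    (hy_mean : IntegrableOn (fun x => x * y x) (Ioi 0)) :
    (∫ x in Ioi (0:ℝ), x * Tlam l y x) = ∫ x in Ioi (0:ℝ), x * y x := by
  classical
  -- choose a measurable nonnegative representative of y
  have hsm : AEStronglyMeasurable y (volume.restrict (Ioi 0)) := hy_int.aestronglyMeasurable
  set Y : ℝ → ℝ := fun t => max (hsm.mk y t) 0 with hYdef
  have hYm : Measurable Y := (hsm.stronglyMeasurable_mk.measurable).max measurable_const
  have hY0 : ∀ t, 0 ≤ Y t := fun t => le_max_right _ _
  have hYae : y =ᵐ[volume.restrict (Ioi 0)] Y := by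
    filter_upwards [hsm.ae_eq_mk] with t ht
    rw [hYdef]
    simp only [← ht, max_eq_left (hy_nonneg t)]
  -- the disagreement set is null
  have hN : volume ({t | y t ≠ Y t} ∩ Ioi 0) = 0 := by
    have := hYae
    rw [Filter.EventuallyEq, ae_iff] at this
    rw [Measure.restrict_apply' measurableSet_Ioi] at this
    exact this
  set N : Set ℝ := {t | y t ≠ Y t} ∩ Ioi 0 with hNdef
  -- Tgas is insensitive to the modification
  have hTgas_eq : ∀ x, Tgas y x = Tgas Y x := by
    intro x
    refine integral_congr_ae ?_
    have hnull : (volume : Measure (ℝ × ℝ)) (N ×ˢ (univ : Set ℝ) ∪ (univ : Set ℝ) ×ˢ N) = 0 := by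
      refine measure_union_null ?_ ?_ <;>
        · rw [Measure.volume_eq_prod, Measure.prod_prod]
          simp [hN]
    have hnm : ∀ᵐ p : ℝ × ℝ, p ∉ N ×ˢ (univ : Set ℝ) ∪ (univ : Set ℝ) ×ˢ N :=
      (measure_eq_zero_iff_ae_notMem.1 hnull)
    refine (ae_restrict_iff' (MeanTlamAux.Sx_meas x)).2 ?_
    filter_upwards [hnm] with p hp hpS
    have h1 : y p.1 = Y p.1 := by
      by_contra h
      exact hp (Or.inl ⟨⟨h, hpS.1⟩, trivial⟩)
    have h2 : y p.2 = Y p.2 := by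
      by_contra h
      exact hp (Or.inr ⟨trivial, h, hpS.2.1⟩)
    rw [h1, h2]
  -- transfer the hypotheses to Y
  have hYint : IntegrableOn Y (Ioi 0) := hy_int.congr hYae
  have hYnorm : (∫ x in Ioi (0:ℝ), Y x) = 1 := by
    rw [← integral_congr_ae hYae]; exact hy_norm
  have hmean_ae : (fun x => x * y x) =ᵐ[volume.restrict (Ioi 0)] fun x => x * Y x := by
    filter_upwards [hYae] with t ht; rw [ht]
  have hYmean : IntegrableOn (fun x => x * Y x) (Ioi 0) := hy_mean.congr hmean_ae
  obtain ⟨hTint, hTval⟩ := MeanTlamAux.key Y hYm hY0 hYint hYnorm hYmean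
  have hmeanY : (∫ x in Ioi (0:ℝ), x * Y x) = ∫ x in Ioi (0:ℝ), x * y x :=
    integral_congr_ae hmean_ae.symm
  have hTfun : (fun x => x * Tgas y x) = fun x => x * Tgas Y x :=
    funext fun x => by rw [hTgas_eq x]
  have hTy_int : IntegrableOn (fun x => x * Tgas y x) (Ioi 0) := by
    rw [hTfun]; exact hTint
  have hTy_val : (∫ x in Ioi (0:ℝ), x * Tgas y x) = ∫ x in Ioi (0:ℝ), x * y x := by
    rw [hTfun, hTval, hmeanY]
  -- final assembly
  have hsplit : (fun x => x * Tlam l y x) =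
      fun x => (1 - l) * (x * y x) + l * (x * Tgas y x) := by
    funext x; rw [Tlam]; ring
  rw [hsplit, integral_add ((hy_mean.const_mul _)) (hTy_int.const_mul _),
    integral_const_mul, integral_const_mul, hTy_val]
  ring
end

section
/- For any Λ > 0 and any nonnegative integrable function y on [0,Λ], the L¹ norm of T_Λ y equals the square of the L¹ norm of y: ∫₀^Λ (T_Λ y)(x) dx = (∫₀^Λ y(x) dx)². In particular, if ∫₀^Λ y(x) dx = 1 then ∫₀^Λ (T_Λ y)(x) dx = 1. -/
open MeasureTheory Set Real

/-- The gas-like market operator with an upper richness limit `Λ`: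
`(T_Λ y)(x) = ∬_{x ≤ u+v ≤ Λ, u,v ≥ 0} y(u) y(v)/(u+v) du dv + y(x) ∫_{Λ-x}^Λ y(v) dv`. -/
noncomputable def TLim (L : ℝ) (y : ℝ → ℝ) (x : ℝ) : ℝ :=
  (∫ p in {p : ℝ × ℝ | 0 ≤ p.1 ∧ 0 ≤ p.2 ∧ x ≤ p.1 + p.2 ∧ p.1 + p.2 ≤ L},
    y p.1 * y p.2 / (p.1 + p.2)) + y x * ∫ v in Icc (L - x) L, y v

/-- The truncated exponential density `y_{a,Λ}(x) = a e^{-ax} / (1 - e^{-aΛ})`. -/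
noncomputable def truncExp (a L : ℝ) (x : ℝ) : ℝ :=
  a * exp (-a * x) / (1 - exp (-a * L))

section AuxTLim

open Function

lemma line_null' (L : ℝ) : (volume : Measure (ℝ × ℝ)) {p : ℝ × ℝ | p.1 + p.2 = L} = 0 := by
  have hm : MeasurableSet {p : ℝ × ℝ | p.1 + p.2 = L} :=
    measurableSet_eq_fun (measurable_fst.add measurable_snd) measurable_const
  rw [MeasureTheory.Measure.volume_eq_prod, Measure.prod_apply hm]
  have h : ∀ x : ℝ, (volume : Measure ℝ) {a : ℝ | x + a = L} = 0 := by
    intro x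
    have : {a : ℝ | x + a = L} = {L - x} := by
      ext v
      simp only [mem_setOf_eq, mem_singleton_iff]
      constructor <;> intro h <;> linarith
    rw [this, measure_singleton]
  simp only [Set.preimage_setOf_eq]
  simp [h]

section Core

variable (L : ℝ) (z : ℝ → ℝ)

lemma hS0m : MeasurableSet {p : ℝ × ℝ | 0 ≤ p.1 ∧ 0 ≤ p.2 ∧ p.1 + p.2 ≤ L} := by
  refine MeasurableSet.inter ?_ (MeasurableSet.inter ?_ ?_)
  · exact measurableSet_le measurable_const measurable_fst
  · exact measurableSet_le measurable_const measurable_snd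
  · exact measurableSet_le (measurable_fst.add measurable_snd) measurable_const

lemma coreF_int (hz_int : IntegrableOn z (Icc 0 L)) :
    IntegrableOn (fun p : ℝ × ℝ => z p.1 * z p.2) (Icc (0:ℝ) L ×ˢ Icc (0:ℝ) L) := by
  rw [IntegrableOn, MeasureTheory.Measure.volume_eq_prod, ← Measure.prod_restrict]
  exact hz_int.mul_prod hz_int

lemma coreH_sec (hz_nonneg : ∀ x, 0 ≤ z x) :
    ∀ᵐ p ∂((volume : Measure (ℝ × ℝ)).restrict {p : ℝ × ℝ | 0 ≤ p.1 ∧ 0 ≤ p.2 ∧ p.1 + p.2 ≤ L}),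
      (∫ x in Icc (0:ℝ) L, if x ≤ p.1 + p.2 then z p.1 * z p.2 / (p.1 + p.2) else 0)
        = z p.1 * z p.2 ∧
      (∫ x in Icc (0:ℝ) L, ‖if x ≤ p.1 + p.2 then z p.1 * z p.2 / (p.1 + p.2) else 0‖)
        = z p.1 * z p.2 := by
  have h0 : ∀ᵐ p ∂((volume : Measure (ℝ × ℝ)).restrict
      {p : ℝ × ℝ | 0 ≤ p.1 ∧ 0 ≤ p.2 ∧ p.1 + p.2 ≤ L}), p ∉ {p : ℝ × ℝ | p.1 + p.2 = 0} := by
    refine measure_eq_zero_iff_ae_notMem.mp ?_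
    rw [Measure.restrict_apply' (hS0m L)]
    exact measure_mono_null inter_subset_left (line_null' 0)
  filter_upwards [ae_restrict_mem (hS0m L), h0] with p hp hc0
  obtain ⟨hu, hv, hsum⟩ := hp
  have hc : 0 < p.1 + p.2 := lt_of_le_of_ne (by linarith) (fun h => hc0 h.symm)
  have hfp : 0 ≤ z p.1 * z p.2 / (p.1 + p.2) :=
    div_nonneg (mul_nonneg (hz_nonneg _) (hz_nonneg _)) hc.le
  have hfun : ∀ x : ℝ, (if x ≤ p.1 + p.2 then z p.1 * z p.2 / (p.1 + p.2) else 0)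
      = (Iic (p.1 + p.2)).indicator (fun _ => z p.1 * z p.2 / (p.1 + p.2)) x := by
    intro x; simp [Set.indicator_apply, mem_Iic]
  have hQI : Icc (0:ℝ) L ∩ Iic (p.1 + p.2) = Icc 0 (p.1 + p.2) := by
    ext t
    simp only [mem_inter_iff, mem_Icc, mem_Iic]
    constructor
    · rintro ⟨⟨h1, h2⟩, h3⟩; exact ⟨h1, h3⟩
    · rintro ⟨h1, h2⟩; exact ⟨⟨h1, by linarith⟩, h2⟩
  have hval : (∫ x in Icc (0:ℝ) L, if x ≤ p.1 + p.2 then z p.1 * z p.2 / (p.1 + p.2) else 0)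
      = z p.1 * z p.2 := by
    simp_rw [hfun]
    rw [setIntegral_indicator measurableSet_Iic, hQI, setIntegral_const, Real.volume_real_Icc_of_le hc.le,
      sub_zero, smul_eq_mul, mul_comm,
      div_mul_cancel₀ _ (ne_of_gt hc)]
  refine ⟨hval, ?_⟩
  calc (∫ x in Icc (0:ℝ) L, ‖if x ≤ p.1 + p.2 then z p.1 * z p.2 / (p.1 + p.2) else 0‖)
      = ∫ x in Icc (0:ℝ) L, if x ≤ p.1 + p.2 then z p.1 * z p.2 / (p.1 + p.2) else 0 := by
        refine integral_congr_ae (Filter.Eventually.of_forall fun x => ?_)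
        refine norm_of_nonneg ?_
        split
        · exact hfp
        · exact le_refl 0
    _ = z p.1 * z p.2 := hval

lemma coreH_int (hz_meas : Measurable z) (hz_nonneg : ∀ x, 0 ≤ z x)
    (hz_int : IntegrableOn z (Icc 0 L)) :
    Integrable
      (uncurry fun (x : ℝ) (p : ℝ × ℝ) =>
        if x ≤ p.1 + p.2 then z p.1 * z p.2 / (p.1 + p.2) else 0)
      (((volume : Measure ℝ).restrict (Icc 0 L)).prod
        ((volume : Measure (ℝ × ℝ)).restrict {p : ℝ × ℝ | 0 ≤ p.1 ∧ 0 ≤ p.2 ∧ p.1 + p.2 ≤ L})) := by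
  have hmeas : Measurable
      (uncurry fun (x : ℝ) (p : ℝ × ℝ) =>
        if x ≤ p.1 + p.2 then z p.1 * z p.2 / (p.1 + p.2) else 0) := by
    refine Measurable.ite ?_ ?_ measurable_const
    · exact measurableSet_le measurable_fst
        ((measurable_fst.comp measurable_snd).add (measurable_snd.comp measurable_snd))
    · exact ((hz_meas.comp (measurable_fst.comp measurable_snd)).mul
        (hz_meas.comp (measurable_snd.comp measurable_snd))).div
        ((measurable_fst.comp measurable_snd).add (measurable_snd.comp measurable_snd))
  rw [integrable_prod_iff' hmeas.aestronglyMeasurable]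
  constructor
  · refine Filter.Eventually.of_forall fun p => ?_
    have hfun : (fun x : ℝ =>
        uncurry (fun (x : ℝ) (p : ℝ × ℝ) =>
          if x ≤ p.1 + p.2 then z p.1 * z p.2 / (p.1 + p.2) else 0) (x, p))
        = (Iic (p.1 + p.2)).indicator (fun _ => z p.1 * z p.2 / (p.1 + p.2)) := by
      funext x; simp [uncurry, Set.indicator_apply, mem_Iic]
    rw [hfun]
    exact (integrableOn_const measure_Icc_lt_top.ne).indicator measurableSet_Iic
  · have hFS : IntegrableOn (fun p : ℝ × ℝ => z p.1 * z p.2)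
        {p : ℝ × ℝ | 0 ≤ p.1 ∧ 0 ≤ p.2 ∧ p.1 + p.2 ≤ L} := by
      refine (coreF_int L z hz_int).mono_set ?_
      rintro p ⟨hu, hv, hs⟩
      exact ⟨⟨hu, by linarith⟩, ⟨hv, by linarith⟩⟩
    refine hFS.congr ?_
    filter_upwards [coreH_sec L z hz_nonneg] with p hp
    exact hp.2.symm

lemma coreA (hz_meas : Measurable z) (hz_nonneg : ∀ x, 0 ≤ z x)
    (hz_int : IntegrableOn z (Icc 0 L)) :
    Integrable (fun x : ℝ => ∫ p in {p : ℝ × ℝ | 0 ≤ p.1 ∧ 0 ≤ p.2 ∧ x ≤ p.1 + p.2 ∧ p.1 + p.2 ≤ L},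
        z p.1 * z p.2 / (p.1 + p.2)) ((volume : Measure ℝ).restrict (Icc 0 L)) ∧
    (∫ x in Icc (0:ℝ) L, ∫ p in {p : ℝ × ℝ | 0 ≤ p.1 ∧ 0 ≤ p.2 ∧ x ≤ p.1 + p.2 ∧ p.1 + p.2 ≤ L},
        z p.1 * z p.2 / (p.1 + p.2))
      = ∫ p in {p : ℝ × ℝ | 0 ≤ p.1 ∧ 0 ≤ p.2 ∧ p.1 + p.2 ≤ L}, z p.1 * z p.2 := by
  have hre : ∀ x : ℝ,
      (∫ p in {p : ℝ × ℝ | 0 ≤ p.1 ∧ 0 ≤ p.2 ∧ x ≤ p.1 + p.2 ∧ p.1 + p.2 ≤ L},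
        z p.1 * z p.2 / (p.1 + p.2))
      = ∫ p in {p : ℝ × ℝ | 0 ≤ p.1 ∧ 0 ≤ p.2 ∧ p.1 + p.2 ≤ L},
          (if x ≤ p.1 + p.2 then z p.1 * z p.2 / (p.1 + p.2) else 0) := by
    intro x
    have hind : ∀ p : ℝ × ℝ, (if x ≤ p.1 + p.2 then z p.1 * z p.2 / (p.1 + p.2) else 0)
        = ({p : ℝ × ℝ | x ≤ p.1 + p.2}).indicator (fun p => z p.1 * z p.2 / (p.1 + p.2)) p := by
      intro p; simp [Set.indicator_apply]
    have hset : {p : ℝ × ℝ | 0 ≤ p.1 ∧ 0 ≤ p.2 ∧ p.1 + p.2 ≤ L} ∩ {p : ℝ × ℝ | x ≤ p.1 + p.2}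
        = {p : ℝ × ℝ | 0 ≤ p.1 ∧ 0 ≤ p.2 ∧ x ≤ p.1 + p.2 ∧ p.1 + p.2 ≤ L} := by
      ext p
      simp only [mem_inter_iff, mem_setOf_eq]
      tauto
    simp_rw [hind]
    rw [setIntegral_indicator (measurableSet_le measurable_const
      (measurable_fst.add measurable_snd) : MeasurableSet {p : ℝ × ℝ | x ≤ p.1 + p.2}), hset]
  have hH := coreH_int L z hz_meas hz_nonneg hz_int
  constructor
  · refine hH.integral_prod_left.congr (Filter.Eventually.of_forall fun x => ?_)
    exact (hre x).symm
  · calc (∫ x in Icc (0:ℝ) L,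
          ∫ p in {p : ℝ × ℝ | 0 ≤ p.1 ∧ 0 ≤ p.2 ∧ x ≤ p.1 + p.2 ∧ p.1 + p.2 ≤ L},
            z p.1 * z p.2 / (p.1 + p.2))
        = ∫ x in Icc (0:ℝ) L, ∫ p in {p : ℝ × ℝ | 0 ≤ p.1 ∧ 0 ≤ p.2 ∧ p.1 + p.2 ≤ L},
            (if x ≤ p.1 + p.2 then z p.1 * z p.2 / (p.1 + p.2) else 0) :=
          integral_congr_ae (Filter.Eventually.of_forall hre)
      _ = ∫ p in {p : ℝ × ℝ | 0 ≤ p.1 ∧ 0 ≤ p.2 ∧ p.1 + p.2 ≤ L},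
            ∫ x in Icc (0:ℝ) L, (if x ≤ p.1 + p.2 then z p.1 * z p.2 / (p.1 + p.2) else 0) :=
          integral_integral_swap hH
      _ = ∫ p in {p : ℝ × ℝ | 0 ≤ p.1 ∧ 0 ≤ p.2 ∧ p.1 + p.2 ≤ L}, z p.1 * z p.2 := by
          refine integral_congr_ae ?_
          filter_upwards [coreH_sec L z hz_nonneg] with p hp
          exact hp.1

end Core

lemma coreB (L : ℝ) (z : ℝ → ℝ) (hz_meas : Measurable z)
    (hz_int : IntegrableOn z (Icc 0 L)) :
    Integrable (fun x : ℝ => z x * ∫ v in Icc (L - x) L, z v)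
      ((volume : Measure ℝ).restrict (Icc 0 L)) ∧
    (∫ x in Icc (0:ℝ) L, z x * ∫ v in Icc (L - x) L, z v)
      = ∫ p in (Icc (0:ℝ) L ×ˢ Icc (0:ℝ) L) ∩ {p : ℝ × ℝ | L ≤ p.1 + p.2}, z p.1 * z p.2 := by
  have hTm : MeasurableSet {p : ℝ × ℝ | L ≤ p.1 + p.2} :=
    measurableSet_le measurable_const (measurable_fst.add measurable_snd)
  have hInd : IntegrableOn
      (({p : ℝ × ℝ | L ≤ p.1 + p.2}).indicator fun p : ℝ × ℝ => z p.1 * z p.2)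
      (Icc (0:ℝ) L ×ˢ Icc (0:ℝ) L) := (coreF_int L z hz_int).indicator hTm
  have key : ∀ x ∈ Icc (0:ℝ) L,
      z x * ∫ v in Icc (L - x) L, z v
        = ∫ v in Icc (0:ℝ) L, if L ≤ x + v then z x * z v else 0 := by
    intro x hx
    have hIcc : Icc (L - x) L = Icc (0:ℝ) L ∩ {v : ℝ | L ≤ x + v} := by
      ext v
      simp only [mem_Icc, mem_inter_iff, mem_setOf_eq]
      constructor
      · rintro ⟨h1, h2⟩; exact ⟨⟨by linarith [hx.2], h2⟩, by linarith⟩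
      · rintro ⟨⟨h1, h2⟩, h3⟩; exact ⟨by linarith, h2⟩
    have hind : ∀ v : ℝ, (if L ≤ x + v then z x * z v else 0)
        = ({v : ℝ | L ≤ x + v}).indicator (fun v => z x * z v) v := by
      intro v; simp [Set.indicator_apply]
    simp_rw [hind]
    rw [setIntegral_indicator (measurableSet_le measurable_const
      (by fun_prop : Measurable fun v : ℝ => x + v)), ← hIcc, integral_const_mul]
  have hunc : Integrable (uncurry fun x v : ℝ => if L ≤ x + v then z x * z v else 0)
      (((volume : Measure ℝ).restrict (Icc 0 L)).prod
        ((volume : Measure ℝ).restrict (Icc 0 L))) := by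
    rw [Measure.prod_restrict, ← MeasureTheory.Measure.volume_eq_prod]
    refine hInd.congr (Filter.Eventually.of_forall fun p => ?_)
    simp [uncurry, Set.indicator_apply]
  constructor
  · refine hunc.integral_prod_left.congr ?_
    filter_upwards [ae_restrict_mem measurableSet_Icc] with x hx
    exact (key x hx).symm
  · calc (∫ x in Icc (0:ℝ) L, z x * ∫ v in Icc (L - x) L, z v)
        = ∫ x in Icc (0:ℝ) L, ∫ v in Icc (0:ℝ) L, if L ≤ x + v then z x * z v else 0 := by
          refine integral_congr_ae ?_
          filter_upwards [ae_restrict_mem measurableSet_Icc] with x hx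
          exact key x hx
      _ = ∫ p : ℝ × ℝ, (if L ≤ p.1 + p.2 then z p.1 * z p.2 else 0)
            ∂(((volume : Measure ℝ).restrict (Icc 0 L)).prod
              ((volume : Measure ℝ).restrict (Icc 0 L))) := integral_integral hunc
      _ = ∫ p in (Icc (0:ℝ) L ×ˢ Icc (0:ℝ) L) ∩ {p : ℝ × ℝ | L ≤ p.1 + p.2},
            z p.1 * z p.2 := by
          rw [Measure.prod_restrict, ← MeasureTheory.Measure.volume_eq_prod]
          have hind : ∀ p : ℝ × ℝ, (if L ≤ p.1 + p.2 then z p.1 * z p.2 else 0)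
              = ({p : ℝ × ℝ | L ≤ p.1 + p.2}).indicator (fun p => z p.1 * z p.2) p := by
            intro p; simp [Set.indicator_apply]
          simp_rw [hind]
          rw [setIntegral_indicator hTm]

lemma core_val (L : ℝ) (hL : 0 < L) (z : ℝ → ℝ) (hz_meas : Measurable z)
    (hz_nonneg : ∀ x, 0 ≤ z x) (hz_int : IntegrableOn z (Icc 0 L)) :
    (∫ x in Icc (0:ℝ) L, TLim L z x) = (∫ x in Icc (0:ℝ) L, z x) ^ 2 := by
  obtain ⟨hA_int, hA⟩ := coreA L z hz_meas hz_nonneg hz_int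
  obtain ⟨hB_int, hB⟩ := coreB L z hz_meas hz_int
  have hF := coreF_int L z hz_int
  have hsum : (∫ x in Icc (0:ℝ) L, TLim L z x)
      = (∫ x in Icc (0:ℝ) L,
          ∫ p in {p : ℝ × ℝ | 0 ≤ p.1 ∧ 0 ≤ p.2 ∧ x ≤ p.1 + p.2 ∧ p.1 + p.2 ≤ L},
            z p.1 * z p.2 / (p.1 + p.2))
        + ∫ x in Icc (0:ℝ) L, z x * ∫ v in Icc (L - x) L, z v := by
    simp only [TLim]
    exact integral_add hA_int hB_int
  rw [hsum, hA, hB]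
  -- splitting the square
  have hltm : MeasurableSet {p : ℝ × ℝ | p.1 + p.2 < L} :=
    measurableSet_lt (measurable_fst.add measurable_snd) measurable_const
  have hgem : MeasurableSet {p : ℝ × ℝ | L ≤ p.1 + p.2} :=
    measurableSet_le measurable_const (measurable_fst.add measurable_snd)
  have hsplit : Icc (0:ℝ) L ×ˢ Icc (0:ℝ) L
      = ((Icc (0:ℝ) L ×ˢ Icc (0:ℝ) L) ∩ {p : ℝ × ℝ | p.1 + p.2 < L})
        ∪ ((Icc (0:ℝ) L ×ˢ Icc (0:ℝ) L) ∩ {p : ℝ × ℝ | L ≤ p.1 + p.2}) := by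
    ext p
    simp only [mem_union, mem_inter_iff, mem_setOf_eq]
    constructor
    · intro h
      rcases lt_or_ge (p.1 + p.2) L with h' | h'
      · exact Or.inl ⟨h, h'⟩
      · exact Or.inr ⟨h, h'⟩
    · rintro (⟨h, _⟩ | ⟨h, _⟩) <;> exact h
  have hdisj : Disjoint ((Icc (0:ℝ) L ×ˢ Icc (0:ℝ) L) ∩ {p : ℝ × ℝ | p.1 + p.2 < L})
      ((Icc (0:ℝ) L ×ˢ Icc (0:ℝ) L) ∩ {p : ℝ × ℝ | L ≤ p.1 + p.2}) := by
    refine Set.disjoint_left.mpr ?_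
    rintro p ⟨_, h1⟩ hmem
    have h2 : L ≤ p.1 + p.2 := hmem.2
    exact not_le.mpr h1 h2
  have hIsplit : (∫ p in Icc (0:ℝ) L ×ˢ Icc (0:ℝ) L, z p.1 * z p.2)
      = (∫ p in (Icc (0:ℝ) L ×ˢ Icc (0:ℝ) L) ∩ {p : ℝ × ℝ | p.1 + p.2 < L}, z p.1 * z p.2)
        + ∫ p in (Icc (0:ℝ) L ×ˢ Icc (0:ℝ) L) ∩ {p : ℝ × ℝ | L ≤ p.1 + p.2}, z p.1 * z p.2 := by
    rw [← setIntegral_union hdisj (MeasurableSet.inter (measurableSet_Icc.prod measurableSet_Icc) hgem)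
      (hF.mono_set inter_subset_left) (hF.mono_set inter_subset_left), ← hsplit]
  have hS0eq : (∫ p in {p : ℝ × ℝ | 0 ≤ p.1 ∧ 0 ≤ p.2 ∧ p.1 + p.2 ≤ L}, z p.1 * z p.2)
      = ∫ p in (Icc (0:ℝ) L ×ˢ Icc (0:ℝ) L) ∩ {p : ℝ × ℝ | p.1 + p.2 < L}, z p.1 * z p.2 := by
    refine setIntegral_congr_set (MeasureTheory.ae_eq_set.mpr ⟨?_, ?_⟩)
    · refine measure_mono_null ?_ (line_null' L)
      rintro p ⟨⟨hu, hv, hs⟩, hp⟩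
      simp only [mem_inter_iff, mem_prod, mem_Icc, mem_setOf_eq, not_and, not_lt] at hp
      have : L ≤ p.1 + p.2 := hp ⟨⟨hu, by linarith⟩, ⟨hv, by linarith⟩⟩
      exact le_antisymm hs this
    · refine measure_mono_null ?_ measure_empty
      rintro p ⟨⟨hpq, hlt⟩, hnot⟩
      exact hnot ⟨hpq.1.1, hpq.2.1, le_of_lt hlt⟩
  have hsq : (∫ p in Icc (0:ℝ) L ×ˢ Icc (0:ℝ) L, z p.1 * z p.2)
      = (∫ x in Icc (0:ℝ) L, z x) ^ 2 := by
    rw [MeasureTheory.Measure.volume_eq_prod, setIntegral_prod_mul, sq]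
  rw [hS0eq, ← hIsplit, hsq]

end AuxTLim

/-- for any `Λ > 0` and nonnegative integrable `y` on `[0,Λ]`,
`‖T_Λ y‖ = ‖y‖²`; in particular `‖y‖ = 1` implies `‖T_Λ y‖ = 1`. -/
theorem norm_TLim_eq_sq (L : ℝ) (hL : 0 < L)
    (y : ℝ → ℝ) (hy_nonneg : ∀ x, 0 ≤ y x)
    (hy_int : IntegrableOn y (Icc 0 L)) :
    (∫ x in Icc (0:ℝ) L, TLim L y x) = (∫ x in Icc (0:ℝ) L, y x) ^ 2 ∧
    ((∫ x in Icc (0:ℝ) L, y x) = 1 → (∫ x in Icc (0:ℝ) L, TLim L y x) = 1) := by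
  have has := hy_int.aestronglyMeasurable
  set z : ℝ → ℝ := fun t => max (has.mk y t) 0 with hz_def
  have hz_meas : Measurable z := has.stronglyMeasurable_mk.measurable.max measurable_const
  have hyz : y =ᵐ[(volume : Measure ℝ).restrict (Icc 0 L)] z := by
    filter_upwards [has.ae_eq_mk] with t ht
    rw [hz_def]
    simp only [← ht, max_eq_left (hy_nonneg t)]
  have hz_nonneg : ∀ x, 0 ≤ z x := fun x => le_max_right _ _
  have hz_int : IntegrableOn z (Icc 0 L) := hy_int.congr hyz
  have hIy : (∫ x in Icc (0:ℝ) L, y x) = ∫ x in Icc (0:ℝ) L, z x := integral_congr_ae hyz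
  have hQm : MeasurableSet (Icc (0:ℝ) L) := measurableSet_Icc
  have hN : (volume : Measure ℝ) ({t : ℝ | y t ≠ z t} ∩ Icc 0 L) = 0 := by
    have h := ae_iff.mp hyz
    rwa [Measure.restrict_apply' hQm] at h
  have hfirst : ∀ x : ℝ,
      (∫ p in {p : ℝ × ℝ | 0 ≤ p.1 ∧ 0 ≤ p.2 ∧ x ≤ p.1 + p.2 ∧ p.1 + p.2 ≤ L},
        y p.1 * y p.2 / (p.1 + p.2))
      = ∫ p in {p : ℝ × ℝ | 0 ≤ p.1 ∧ 0 ≤ p.2 ∧ x ≤ p.1 + p.2 ∧ p.1 + p.2 ≤ L},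
          z p.1 * z p.2 / (p.1 + p.2) := by
    intro x
    refine integral_congr_ae ?_
    have hSm : MeasurableSet {p : ℝ × ℝ | 0 ≤ p.1 ∧ 0 ≤ p.2 ∧ x ≤ p.1 + p.2 ∧ p.1 + p.2 ≤ L} := by
      refine MeasurableSet.inter ?_ (MeasurableSet.inter ?_ (MeasurableSet.inter ?_ ?_))
      · exact measurableSet_le measurable_const measurable_fst
      · exact measurableSet_le measurable_const measurable_snd
      · exact measurableSet_le measurable_const (measurable_fst.add measurable_snd)
      · exact measurableSet_le (measurable_fst.add measurable_snd) measurable_const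
    rw [Filter.EventuallyEq, ae_iff, Measure.restrict_apply' hSm]
    refine measure_mono_null (t := (({t : ℝ | y t ≠ z t} ∩ Icc 0 L) ×ˢ (univ : Set ℝ))
      ∪ ((univ : Set ℝ) ×ˢ ({t : ℝ | y t ≠ z t} ∩ Icc 0 L))) ?_ ?_
    · rintro p ⟨hbad, hu, hv, hx, hs⟩
      by_cases h1 : y p.1 = z p.1
      · right
        have h2 : y p.2 ≠ z p.2 := by
          intro h2
          exact hbad (by rw [h1, h2])
        exact ⟨trivial, h2, ⟨hv, by linarith⟩⟩
      · left
        exact ⟨⟨h1, ⟨hu, by linarith⟩⟩, trivial⟩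
    · refine measure_union_null ?_ ?_
      · rw [MeasureTheory.Measure.volume_eq_prod, Measure.prod_prod, hN, zero_mul]
      · rw [MeasureTheory.Measure.volume_eq_prod, Measure.prod_prod, hN, mul_zero]
  have hsecond : ∀ᵐ x ∂((volume : Measure ℝ).restrict (Icc (0:ℝ) L)),
      y x * (∫ v in Icc (L - x) L, y v) = z x * ∫ v in Icc (L - x) L, z v := by
    filter_upwards [hyz, ae_restrict_mem hQm] with x hx hxQ
    rw [hx]
    congr 1
    refine integral_congr_ae (ae_restrict_of_ae_restrict_of_subset ?_ hyz)
    intro v hv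
    exact ⟨by linarith [hv.1, hxQ.2], hv.2⟩
  have hT : (∫ x in Icc (0:ℝ) L, TLim L y x) = ∫ x in Icc (0:ℝ) L, TLim L z x := by
    refine integral_congr_ae ?_
    filter_upwards [hsecond] with x hx
    simp only [TLim]
    rw [hfirst x, hx]
  have hcore := core_val L hL z hz_meas hz_nonneg hz_int
  constructor
  · rw [hT, hIy]
    exact hcore
  · intro h1
    rw [hT, hcore, ← hIy, h1, one_pow]
end

section
/- For any Λ > 0, the operator T_Λ conserves the mean richness: if y is a nonnegative integrable function on [0,Λ] with ∫₀^Λ y(x) dx = 1, then ∫₀^Λ x (T_Λ y)(x) dx = ∫₀^Λ x y(x) dx. -/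
open MeasureTheory Set Real

section Aux

variable {L : ℝ} {y : ℝ → ℝ}

private lemma measW (L : ℝ) : MeasurableSet
    {z : ℝ × ℝ × ℝ | 0 ≤ z.2.1 ∧ 0 ≤ z.2.2 ∧ z.1 ≤ z.2.1 + z.2.2 ∧ z.2.1 + z.2.2 ≤ L} := by
  have h1 : Measurable fun z : ℝ × ℝ × ℝ => z.2.1 + z.2.2 :=
    measurable_snd.fst.add measurable_snd.snd
  exact ((measurableSet_le measurable_const measurable_snd.fst).inter
    ((measurableSet_le measurable_const measurable_snd.snd).inter
      ((measurableSet_le measurable_fst h1).inter (measurableSet_le h1 measurable_const))))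

private lemma measS (L x : ℝ) : MeasurableSet
    {p : ℝ × ℝ | 0 ≤ p.1 ∧ 0 ≤ p.2 ∧ x ≤ p.1 + p.2 ∧ p.1 + p.2 ≤ L} := by
  have h1 : Measurable fun p : ℝ × ℝ => p.1 + p.2 := measurable_fst.add measurable_snd
  exact ((measurableSet_le measurable_const measurable_fst).inter
    ((measurableSet_le measurable_const measurable_snd).inter
      ((measurableSet_le measurable_const h1).inter (measurableSet_le h1 measurable_const))))

private lemma measU (L : ℝ) : MeasurableSet {p : ℝ × ℝ | L < p.1 + p.2} :=
  measurableSet_lt measurable_const (measurable_fst.add measurable_snd)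

private lemma measT (L : ℝ) : MeasurableSet {p : ℝ × ℝ | p.1 + p.2 ≤ L} :=
  measurableSet_le (measurable_fst.add measurable_snd) measurable_const

/-- the restricted product measure as one restriction -/
private lemma prod2_eq (L : ℝ) :
    (volume.restrict (Icc (0:ℝ) L)).prod (volume.restrict (Icc (0:ℝ) L))
      = (volume : Measure (ℝ × ℝ)).restrict (Icc (0:ℝ) L ×ˢ Icc (0:ℝ) L) := by
  rw [Measure.prod_restrict, ← Measure.volume_eq_prod]

private lemma prod3_eq (L : ℝ) :
    (volume.restrict (Icc (0:ℝ) L)).prod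
        ((volume.restrict (Icc (0:ℝ) L)).prod (volume.restrict (Icc (0:ℝ) L)))
      = (volume : Measure (ℝ × ℝ × ℝ)).restrict
          (Icc (0:ℝ) L ×ˢ (Icc (0:ℝ) L ×ˢ Icc (0:ℝ) L)) := by
  rw [prod2_eq, Measure.prod_restrict, ← Measure.volume_eq_prod]

private lemma intIcc (s : ℝ) (h : 0 ≤ s) : ∫ x in Icc 0 s, x = s ^ 2 / 2 := by
  rw [integral_Icc_eq_integral_Ioc, ← intervalIntegral.integral_of_le h, integral_id]
  ring

end Aux

theorem mean_TLim_eq (L : ℝ) (hL : 0 < L)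
    (y : ℝ → ℝ) (hy_nonneg : ∀ x, 0 ≤ y x)
    (hy_int : IntegrableOn y (Icc 0 L))
    (hy_norm : (∫ x in Icc (0:ℝ) L, y x) = 1) :
    (∫ x in Icc (0:ℝ) L, x * TLim L y x) = ∫ x in Icc (0:ℝ) L, x * y x := by
  set μ : Measure ℝ := volume.restrict (Icc (0:ℝ) L) with hμ
  set μ : Measure ℝ := volume.restrict (Icc (0:ℝ) L) with hμ
  set μ2 : Measure (ℝ × ℝ) := μ.prod μ with hμ2
  set μ3 : Measure (ℝ × ℝ × ℝ) := μ.prod μ2 with hμ3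
  haveI : IsFiniteMeasure μ := by rw [hμ]; infer_instance
  have hy_m : AEStronglyMeasurable y μ := hy_int.aestronglyMeasurable
  have hyy_m : AEStronglyMeasurable (fun p : ℝ × ℝ => y p.1 * y p.2) μ2 := hy_m.comp_fst.mul hy_m.comp_snd
  have hyy_int : Integrable (fun p : ℝ × ℝ => y p.1 * y p.2) μ2 := hy_int.mul_prod hy_int
  have hae1 : ∀ᵐ x ∂μ, x ∈ Icc (0:ℝ) L := ae_restrict_mem measurableSet_Icc
  have hae2 : ∀ᵐ p ∂μ2, p ∈ Icc (0:ℝ) L ×ˢ Icc (0:ℝ) L := by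
    rw [hμ2, hμ, prod2_eq]
    exact ae_restrict_mem (measurableSet_Icc.prod measurableSet_Icc)
  have hae3 : ∀ᵐ z ∂μ3, z ∈ Icc (0:ℝ) L ×ˢ (Icc (0:ℝ) L ×ˢ Icc (0:ℝ) L) := by
    rw [hμ3, hμ2, hμ, prod3_eq]
    exact ae_restrict_mem (measurableSet_Icc.prod (measurableSet_Icc.prod measurableSet_Icc))
  set W : Set (ℝ × ℝ × ℝ) :=
    {z : ℝ × ℝ × ℝ | 0 ≤ z.2.1 ∧ 0 ≤ z.2.2 ∧ z.1 ≤ z.2.1 + z.2.2 ∧ z.2.1 + z.2.2 ≤ L} with hW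
  set U : Set (ℝ × ℝ) := {p : ℝ × ℝ | L < p.1 + p.2} with hU
  set T : Set (ℝ × ℝ) := {p : ℝ × ℝ | p.1 + p.2 ≤ L} with hT
  set G : ℝ × ℝ × ℝ → ℝ :=
    W.indicator (fun z => z.1 * (y z.2.1 * y z.2.2 / (z.2.1 + z.2.2))) with hG
  set F : ℝ × ℝ → ℝ := U.indicator (fun p => p.1 * (y p.1 * y p.2)) with hF
  set F' : ℝ × ℝ → ℝ := U.indicator (fun p => p.2 * (y p.1 * y p.2)) with hF'
  set g : ℝ × ℝ → ℝ := fun p => (p.1 + p.2) / 2 * (y p.1 * y p.2) with hg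
  -- Integrability of G
  have hG_aesm : AEStronglyMeasurable G μ3 := by
    rw [hG]
    exact (((measurable_fst.aemeasurable).mul
      ((hyy_m.comp_snd.aemeasurable).div
        ((measurable_snd.fst.add measurable_snd.snd).aemeasurable))).aestronglyMeasurable).indicator
      (measW L)
  have hG_bound : ∀ᵐ z ∂μ3, ‖G z‖ ≤ y z.2.1 * y z.2.2 := by
    filter_upwards [hae3] with z hz
    obtain ⟨hz1, hz2⟩ := hz
    have hyy0 : 0 ≤ y z.2.1 * y z.2.2 := mul_nonneg (hy_nonneg _) (hy_nonneg _)
    by_cases hzW : z ∈ W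
    · rw [hG, indicator_of_mem hzW]
      obtain ⟨hu, hv, hxs, hsL⟩ := hzW
      rcases eq_or_lt_of_le (add_nonneg hu hv) with hs | hs
      · rw [← hs, div_zero, mul_zero, norm_zero]; exact hyy0
      · have h1 : (0:ℝ) ≤ z.1 := hz1.1
        rw [Real.norm_eq_abs, abs_of_nonneg (mul_nonneg h1 (div_nonneg hyy0 hs.le))]
        calc z.1 * (y z.2.1 * y z.2.2 / (z.2.1 + z.2.2))
            ≤ (z.2.1 + z.2.2) * (y z.2.1 * y z.2.2 / (z.2.1 + z.2.2)) :=
              mul_le_mul_of_nonneg_right hxs (div_nonneg hyy0 hs.le)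
          _ = y z.2.1 * y z.2.2 := by field_simp
    · rw [hG, indicator_of_notMem hzW, norm_zero]; exact hyy0
  have hG_int : Integrable G μ3 := by
    refine Integrable.mono' ?_ hG_aesm hG_bound
    have h := (integrable_const (1:ℝ) (μ := μ)).mul_prod hyy_int
    simpa using h
  -- the first term, rewritten on slices
  have hA_eq : (fun x =>
      x * (∫ p in {p : ℝ × ℝ | 0 ≤ p.1 ∧ 0 ≤ p.2 ∧ x ≤ p.1 + p.2 ∧ p.1 + p.2 ≤ L},
        y p.1 * y p.2 / (p.1 + p.2))) =ᵐ[μ] fun x => ∫ p, G (x, p) ∂μ2 := by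
    filter_upwards [hae1] with x hx
    have hGx : (fun p : ℝ × ℝ => G (x, p))
        = ({p : ℝ × ℝ | 0 ≤ p.1 ∧ 0 ≤ p.2 ∧ x ≤ p.1 + p.2 ∧ p.1 + p.2 ≤ L}).indicator
          (fun p => x * (y p.1 * y p.2 / (p.1 + p.2))) := by
      ext p
      by_cases hp : p ∈ {p : ℝ × ℝ | 0 ≤ p.1 ∧ 0 ≤ p.2 ∧ x ≤ p.1 + p.2 ∧ p.1 + p.2 ≤ L}
      · rw [hG, indicator_of_mem hp, indicator_of_mem (show (x, p) ∈ W from hp)]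
      · rw [hG, indicator_of_notMem (show (x, p) ∉ W from hp), indicator_of_notMem hp]
    have hsub : {p : ℝ × ℝ | 0 ≤ p.1 ∧ 0 ≤ p.2 ∧ x ≤ p.1 + p.2 ∧ p.1 + p.2 ≤ L}
        ⊆ Icc (0:ℝ) L ×ˢ Icc (0:ℝ) L := by
      rintro p ⟨h1, h2, _, h4⟩
      exact ⟨⟨h1, le_trans (le_add_of_nonneg_right h2) h4⟩,
        ⟨h2, le_trans (le_add_of_nonneg_left h1) h4⟩⟩
    have hres : μ2.restrict {p : ℝ × ℝ | 0 ≤ p.1 ∧ 0 ≤ p.2 ∧ x ≤ p.1 + p.2 ∧ p.1 + p.2 ≤ L}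
        = volume.restrict {p : ℝ × ℝ | 0 ≤ p.1 ∧ 0 ≤ p.2 ∧ x ≤ p.1 + p.2 ∧ p.1 + p.2 ≤ L} := by
      rw [hμ2, hμ, prod2_eq, Measure.restrict_restrict (measS L x),
        inter_eq_self_of_subset_left hsub]
    rw [hGx, integral_indicator (measS L x), hres, integral_const_mul]
  have hterm1_int : Integrable (fun x =>
      x * (∫ p in {p : ℝ × ℝ | 0 ≤ p.1 ∧ 0 ≤ p.2 ∧ x ≤ p.1 + p.2 ∧ p.1 + p.2 ≤ L},
        y p.1 * y p.2 / (p.1 + p.2))) μ :=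
    (hG_int.integral_prod_left).congr (hA_eq.symm)
  -- evaluation of inner x-integral
  have hInner : (fun p => ∫ x, G (x, p) ∂μ) =ᵐ[μ2] T.indicator g := by
    filter_upwards [hae2] with p hp
    obtain ⟨hp1, hp2⟩ := hp
    by_cases hsL : p.1 + p.2 ≤ L
    · have hs0 : (0:ℝ) ≤ p.1 + p.2 := add_nonneg hp1.1 hp2.1
      have hGx : (fun x => G (x, p)) = (Iic (p.1 + p.2)).indicator
          (fun x => x * (y p.1 * y p.2 / (p.1 + p.2))) := by
        ext x
        by_cases hx : x ≤ p.1 + p.2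
        · rw [hG, indicator_of_mem (show (x, p) ∈ W from ⟨hp1.1, hp2.1, hx, hsL⟩),
            indicator_of_mem (show x ∈ Iic (p.1 + p.2) from hx)]
        · rw [hG, indicator_of_notMem (show (x, p) ∉ W from fun hm => hx hm.2.2.1),
            indicator_of_notMem (show x ∉ Iic (p.1 + p.2) from hx)]
      have hIic : Iic (p.1 + p.2) ∩ Icc 0 L = Icc 0 (p.1 + p.2) := by
        ext t
        constructor
        · rintro ⟨h1, h2, _⟩; exact ⟨h2, h1⟩
        · rintro ⟨h1, h2⟩; exact ⟨h2, h1, h2.trans hsL⟩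
      rw [hGx, integral_indicator measurableSet_Iic, hμ,
        Measure.restrict_restrict measurableSet_Iic, hIic, integral_mul_const, intIcc _ hs0,
        indicator_of_mem (show p ∈ T from hsL), hg]
      show (p.1 + p.2) ^ 2 / 2 * (y p.1 * y p.2 / (p.1 + p.2))
        = (p.1 + p.2) / 2 * (y p.1 * y p.2)
      rcases eq_or_lt_of_le hs0 with hs | hs
      · rw [← hs, div_zero, mul_zero, zero_div, zero_mul]
      · have hne : p.1 + p.2 ≠ 0 := ne_of_gt hs
        field_simp
    · have hGx : (fun x => G (x, p)) = fun _ => (0:ℝ) := by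
        ext x
        rw [hG, indicator_of_notMem (show (x, p) ∉ W from fun hm => hsL hm.2.2.2)]
      rw [hGx, integral_zero, indicator_of_notMem (show p ∉ T from hsL)]
  have hT_int : Integrable (T.indicator g) μ2 :=
    (hG_int.integral_prod_right).congr hInner
  have hterm1 : (∫ x, x * (∫ p in {p : ℝ × ℝ | 0 ≤ p.1 ∧ 0 ≤ p.2 ∧ x ≤ p.1 + p.2 ∧ p.1 + p.2 ≤ L},
        y p.1 * y p.2 / (p.1 + p.2)) ∂μ) = ∫ p, T.indicator g p ∂μ2 := by
    rw [integral_congr_ae hA_eq]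
    rw [integral_integral_swap (f := fun x p => G (x, p)) hG_int]
    exact integral_congr_ae hInner
  -- second term
  have hyy0' : ∀ p : ℝ × ℝ, 0 ≤ y p.1 * y p.2 := fun p => mul_nonneg (hy_nonneg _) (hy_nonneg _)
  have hF_aesm : AEStronglyMeasurable F μ2 := by
    rw [hF]
    exact ((measurable_fst.aestronglyMeasurable).mul hyy_m).indicator (measU L)
  have hF'_aesm : AEStronglyMeasurable F' μ2 := by
    rw [hF']
    exact ((measurable_snd.aestronglyMeasurable).mul hyy_m).indicator (measU L)
  have hLyy_int : Integrable (fun p : ℝ × ℝ => L * (y p.1 * y p.2)) μ2 := hyy_int.const_mul L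
  have hF_int : Integrable F μ2 := by
    refine hLyy_int.mono' hF_aesm ?_
    filter_upwards [hae2] with p hp
    obtain ⟨hp1, hp2⟩ := hp
    by_cases hpU : p ∈ U
    · rw [hF, indicator_of_mem hpU, Real.norm_eq_abs,
        abs_of_nonneg (mul_nonneg hp1.1 (hyy0' p))]
      exact mul_le_mul_of_nonneg_right hp1.2 (hyy0' p)
    · rw [hF, indicator_of_notMem hpU, norm_zero]
      exact mul_nonneg hL.le (hyy0' p)
  have hF'_int : Integrable F' μ2 := by
    refine hLyy_int.mono' hF'_aesm ?_
    filter_upwards [hae2] with p hp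
    obtain ⟨hp1, hp2⟩ := hp
    by_cases hpU : p ∈ U
    · rw [hF', indicator_of_mem hpU, Real.norm_eq_abs,
        abs_of_nonneg (mul_nonneg hp2.1 (hyy0' p))]
      exact mul_le_mul_of_nonneg_right hp2.2 (hyy0' p)
    · rw [hF', indicator_of_notMem hpU, norm_zero]
      exact mul_nonneg hL.le (hyy0' p)
  have hB_eq : (fun x => x * (y x * ∫ v in Icc (L - x) L, y v))
      =ᵐ[μ] fun x => ∫ v, F (x, v) ∂μ := by
    filter_upwards [hae1] with x hx
    have hFx : (fun v => F (x, v)) = (Ioi (L - x)).indicator (fun v => x * y x * y v) := by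
      ext v
      by_cases hv : L - x < v
      · rw [hF, indicator_of_mem (show (x, v) ∈ U from by simp only [hU, mem_setOf_eq]; linarith),
          indicator_of_mem (show v ∈ Ioi (L - x) from hv)]
        ring
      · rw [hF, indicator_of_notMem (show (x, v) ∉ U from by
            simp only [hU, mem_setOf_eq]; intro h; exact hv (by linarith)),
          indicator_of_notMem (show v ∉ Ioi (L - x) from hv)]
    have hIoi : Ioi (L - x) ∩ Icc 0 L = Ioc (L - x) L := by
      ext v
      constructor
      · rintro ⟨h1, _, h3⟩; exact ⟨h1, h3⟩
      · rintro ⟨h1, h2⟩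
        refine ⟨h1, le_trans ?_ h1.le, h2⟩
        linarith [hx.2]
    rw [hFx, integral_indicator measurableSet_Ioi, hμ,
      Measure.restrict_restrict measurableSet_Ioi, hIoi, integral_const_mul,
      integral_Icc_eq_integral_Ioc]
    ring
  have hterm2_int : Integrable (fun x => x * (y x * ∫ v in Icc (L - x) L, y v)) μ :=
    (hF_int.integral_prod_left).congr (hB_eq.symm)
  have hterm2 : (∫ x, x * (y x * ∫ v in Icc (L - x) L, y v) ∂μ) = ∫ p, F p ∂μ2 := by
    rw [integral_congr_ae hB_eq]
    exact integral_integral (f := fun x v => F (x, v)) hF_int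
  -- symmetrization
  have hswap : ∫ p, F p ∂μ2 = ∫ p, F' p ∂μ2 := by
    rw [hμ2, ← integral_prod_swap F']
    refine integral_congr_ae (Filter.Eventually.of_forall fun z => ?_)
    show F z = F' z.swap
    by_cases hz : z ∈ U
    · have hz' : z.swap ∈ U := by
        simp only [hU, mem_setOf_eq, Prod.fst_swap, Prod.snd_swap] at hz ⊢
        linarith
      rw [hF, hF', indicator_of_mem hz, indicator_of_mem hz']
      simp only [Prod.fst_swap, Prod.snd_swap]
      ring
    · have hz' : z.swap ∉ U := by
        simp only [hU, mem_setOf_eq, Prod.fst_swap, Prod.snd_swap] at hz ⊢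
        intro h; exact hz (by linarith)
      rw [hF, hF', indicator_of_notMem hz, indicator_of_notMem hz']
  -- combine the two indicators over U
  have hUg_eq : ∀ p : ℝ × ℝ, (F p + F' p) / 2 = U.indicator g p := by
    intro p
    by_cases hp : p ∈ U
    · rw [hF, hF', indicator_of_mem hp, indicator_of_mem hp, indicator_of_mem hp, hg]
      show (p.1 * (y p.1 * y p.2) + p.2 * (y p.1 * y p.2)) / 2
        = (p.1 + p.2) / 2 * (y p.1 * y p.2)
      ring
    · rw [hF, hF', indicator_of_notMem hp, indicator_of_notMem hp, indicator_of_notMem hp]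
      norm_num
  have hU_int : Integrable (U.indicator g) μ2 :=
    ((hF_int.add hF'_int).div_const 2).congr (Filter.Eventually.of_forall hUg_eq)
  have hterm2' : ∫ p, F p ∂μ2 = ∫ p, U.indicator g p ∂μ2 := by
    have h1 : ∫ p, F p ∂μ2 = ∫ p, (F p + F' p) / 2 ∂μ2 := by
      rw [integral_div, integral_add hF_int hF'_int, ← hswap]
      ring
    rw [h1]
    exact integral_congr_ae (Filter.Eventually.of_forall hUg_eq)
  -- integrability of x * y x
  have hxy_int : Integrable (fun x => x * y x) μ := by
    refine hy_int.bdd_mul (c := L) aestronglyMeasurable_id ?_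
    filter_upwards [hae1] with x hx
    rw [Real.norm_eq_abs, abs_of_nonneg hx.1]
    exact hx.2
  -- value of the full integral of g
  have hg_val : ∫ p, g p ∂μ2 = ∫ x, x * y x ∂μ := by
    have hsplit : ∀ p : ℝ × ℝ,
        g p = ((p.1 * y p.1) * y p.2 + y p.1 * (p.2 * y p.2)) / 2 := by
      intro p; rw [hg]
      show (p.1 + p.2) / 2 * (y p.1 * y p.2)
        = ((p.1 * y p.1) * y p.2 + y p.1 * (p.2 * y p.2)) / 2
      ring
    have hI1 : Integrable (fun p : ℝ × ℝ => p.1 * y p.1 * y p.2) μ2 :=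
      hxy_int.mul_prod hy_int
    have hI2 : Integrable (fun p : ℝ × ℝ => y p.1 * (p.2 * y p.2)) μ2 :=
      hy_int.mul_prod hxy_int
    have h1 : (∫ p : ℝ × ℝ, p.1 * y p.1 * y p.2 ∂μ2) = (∫ x, x * y x ∂μ) * ∫ x, y x ∂μ := by
      rw [hμ2]; exact integral_prod_mul (fun x => x * y x) y
    have h2 : (∫ p : ℝ × ℝ, y p.1 * (p.2 * y p.2) ∂μ2) = (∫ x, y x ∂μ) * ∫ x, x * y x ∂μ := by
      rw [hμ2]; exact integral_prod_mul y (fun x => x * y x)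
    rw [integral_congr_ae (Filter.Eventually.of_forall hsplit), integral_div,
      integral_add hI1 hI2, h1, h2, hy_norm]
    ring
  -- final combination
  have hTU : T = Uᶜ := by
    ext p; simp [hT, hU, not_lt]
  have hsum : ∫ p, T.indicator g p ∂μ2 + ∫ p, U.indicator g p ∂μ2 = ∫ p, g p ∂μ2 := by
    rw [← integral_add hT_int hU_int]
    refine integral_congr_ae (Filter.Eventually.of_forall fun p => ?_)
    show T.indicator g p + U.indicator g p = g p
    by_cases hp : p ∈ U
    · rw [indicator_of_notMem (show p ∉ T from by rw [hTU]; simpa using hp),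
        indicator_of_mem hp, zero_add]
    · rw [indicator_of_mem (show p ∈ T from by rw [hTU]; simpa using hp),
        indicator_of_notMem hp, add_zero]
  -- assemble
  calc ∫ x, x * TLim L y x ∂μ
      = ∫ x, (x * (∫ p in {p : ℝ × ℝ | 0 ≤ p.1 ∧ 0 ≤ p.2 ∧ x ≤ p.1 + p.2 ∧ p.1 + p.2 ≤ L},
          y p.1 * y p.2 / (p.1 + p.2))
        + x * (y x * ∫ v in Icc (L - x) L, y v)) ∂μ := by
        simp only [TLim, mul_add]
    _ = (∫ x, x * (∫ p in {p : ℝ × ℝ | 0 ≤ p.1 ∧ 0 ≤ p.2 ∧ x ≤ p.1 + p.2 ∧ p.1 + p.2 ≤ L},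
          y p.1 * y p.2 / (p.1 + p.2)) ∂μ)
        + ∫ x, x * (y x * ∫ v in Icc (L - x) L, y v) ∂μ := integral_add hterm1_int hterm2_int
    _ = (∫ p, T.indicator g p ∂μ2) + ∫ p, U.indicator g p ∂μ2 := by rw [hterm1, hterm2, hterm2']
    _ = ∫ p, g p ∂μ2 := hsum
    _ = ∫ x, x * y x ∂μ := hg_val
end

section
/- For any a > 0 and Λ > 0, the truncated exponential density y_{a,Λ}(x) = a e^{−ax}/(1 − e^{−aΛ}) is a fixed point of the operator T_Λ: for all x ∈ [0,Λ], (T_Λ y_{a,Λ})(x) = y_{a,Λ}(x). -/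
set_option maxHeartbeats 1000000

open MeasureTheory Set Real

/-- The shear `(s, u) ↦ (u, s - u)` as a measurable equivalence of `ℝ × ℝ`. -/
def shearEquiv : (ℝ × ℝ) ≃ᵐ (ℝ × ℝ) :=
{ toEquiv :=
  { toFun := fun z => (z.2, z.1 - z.2)
    invFun := fun z => (z.1 + z.2, z.1)
    left_inv := fun z => by simp
    right_inv := fun z => by simp }
  measurable_toFun := measurable_snd.prodMk (measurable_fst.sub measurable_snd)
  measurable_invFun := (measurable_fst.add measurable_snd).prodMk measurable_fst }

lemma integral_exp_neg_Icc (a A B : ℝ) (ha : 0 < a) (hAB : A ≤ B) :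
    ∫ v in Icc A B, Real.exp (-a * v) = (Real.exp (-a * A) - Real.exp (-a * B)) / a := by
  rw [MeasureTheory.integral_Icc_eq_integral_Ioc, ← intervalIntegral.integral_of_le hAB]
  have h : ∀ v ∈ uIcc A B, HasDerivAt (fun v => -(Real.exp (-a * v) / a))
      (Real.exp (-a * v)) v := by
    intro v _
    have h1 : HasDerivAt (fun v : ℝ => -a * v) (-a) v := by
      simpa using (hasDerivAt_id v).const_mul (-a)
    have h2 : HasDerivAt (fun v => -(Real.exp (-a * v) / a)) (-(Real.exp (-a * v) * -a / a)) v :=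
      (h1.exp.div_const a).neg
    convert h2 using 1
    rw [mul_neg, neg_div, neg_neg, mul_div_assoc, div_self ha.ne', mul_one]
  rw [intervalIntegral.integral_eq_sub_of_hasDerivAt h
    (Continuous.intervalIntegrable (by continuity) _ _)]
  ring

lemma double_integral_eval (a L x : ℝ) (ha : 0 < a) (hL : 0 < L) (hx0 : 0 ≤ x) (hxL : x ≤ L) :
    (∫ p in {p : ℝ × ℝ | 0 ≤ p.1 ∧ 0 ≤ p.2 ∧ x ≤ p.1 + p.2 ∧ p.1 + p.2 ≤ L},
      truncExp a L p.1 * truncExp a L p.2 / (p.1 + p.2))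
    = ∫ s in Icc x L, (a / (1 - Real.exp (-a * L)))^2 * Real.exp (-a * s) := by
  set c : ℝ := a / (1 - Real.exp (-a * L)) with hc
  set S : Set (ℝ × ℝ) := {p : ℝ × ℝ | 0 ≤ p.1 ∧ 0 ≤ p.2 ∧ x ≤ p.1 + p.2 ∧ p.1 + p.2 ≤ L}
    with hSdef
  set F : ℝ × ℝ → ℝ := fun p => truncExp a L p.1 * truncExp a L p.2 / (p.1 + p.2) with hF
  set G : ℝ × ℝ → ℝ := fun q => c^2 * Real.exp (-a * q.1) / q.1 with hG
  set S2 : Set (ℝ × ℝ) := {q : ℝ × ℝ | 0 ≤ q.2 ∧ q.2 ≤ q.1 ∧ x ≤ q.1 ∧ q.1 ≤ L} with hS2def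
  set K : ℝ × ℝ → ℝ := S2.indicator G with hK
  have hS : MeasurableSet S := by
    apply MeasurableSet.inter (measurableSet_le measurable_const measurable_fst)
    apply MeasurableSet.inter (measurableSet_le measurable_const measurable_snd)
    exact MeasurableSet.inter
      (measurableSet_le measurable_const (measurable_fst.add measurable_snd))
      (measurableSet_le (measurable_fst.add measurable_snd) measurable_const)
  have hS2 : MeasurableSet S2 := by
    apply MeasurableSet.inter (measurableSet_le measurable_const measurable_snd)
    apply MeasurableSet.inter (measurableSet_le measurable_snd measurable_fst)
    exact MeasurableSet.inter (measurableSet_le measurable_const measurable_fst)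
      (measurableSet_le measurable_fst measurable_const)
  have hGm : Measurable G :=
    (measurable_const.mul ((measurable_fst.const_mul (-a)).exp)).div measurable_fst
  have hy : ∀ t : ℝ, truncExp a L t = c * Real.exp (-a * t) := by
    intro t; rw [truncExp, hc]; ring
  have hmem : ∀ s u : ℝ, ((u, s - u) ∈ S ↔ (s, u) ∈ S2) := by
    intro s u
    simp only [hSdef, hS2def, mem_setOf_eq]
    constructor
    · rintro ⟨h1, h2, h3, h4⟩; exact ⟨h1, by linarith, by linarith, by linarith⟩
    · rintro ⟨h1, h2, h3, h4⟩; exact ⟨h1, by linarith, by linarith, by linarith⟩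
  have h4 : ∀ q : ℝ × ℝ, S.indicator F (shearEquiv q) = K q := by
    rintro ⟨s, u⟩
    have hsh : shearEquiv (s, u) = (u, s - u) := rfl
    rw [hsh, hK]
    by_cases hm : (u, s - u) ∈ S
    · rw [Set.indicator_of_mem hm, Set.indicator_of_mem ((hmem s u).mp hm)]
      have hsum : u + (s - u) = s := by ring
      have he : Real.exp (-a * u) * Real.exp (-a * (s - u)) = Real.exp (-a * s) := by
        rw [← Real.exp_add]; congr 1; ring
      show truncExp a L u * truncExp a L (s - u) / (u + (s - u)) = c^2 * Real.exp (-a * s) / s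
      rw [hy, hy, hsum, show c * Real.exp (-a * u) * (c * Real.exp (-a * (s - u)))
        = c^2 * (Real.exp (-a * u) * Real.exp (-a * (s - u))) by ring, he]
    · rw [Set.indicator_of_notMem hm,
        Set.indicator_of_notMem (fun h => hm ((hmem s u).mpr h))]
  have hK0 : ∀ q : ℝ × ℝ, 0 ≤ K q := by
    intro q
    apply Set.indicator_nonneg
    rintro ⟨s, u⟩ ⟨h1, h2, h3, h4⟩
    exact div_nonneg (by positivity) (hx0.trans h3)
  -- slices
  have hslice_mem : ∀ s : ℝ, s ∈ Icc x L →
      (fun u => K (s, u)) = (Icc (0:ℝ) s).indicator (fun _ => c^2 * Real.exp (-a * s) / s) := by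
    intro s hs
    funext u
    by_cases hu : u ∈ Icc (0:ℝ) s
    · rw [Set.indicator_of_mem hu]
      exact Set.indicator_of_mem (show (s, u) ∈ S2 from ⟨hu.1, hu.2, hs.1, hs.2⟩) G
    · rw [Set.indicator_of_notMem hu]
      refine Set.indicator_of_notMem (fun h => hu ⟨h.1, h.2.1⟩) G
  have hslice_nmem : ∀ s : ℝ, s ∉ Icc x L → (fun u => K (s, u)) = fun _ => 0 := by
    intro s hs
    funext u
    refine Set.indicator_of_notMem (fun h => hs ⟨h.2.2.1, h.2.2.2⟩) G
  have hint_slice : ∀ s : ℝ, Integrable (fun u => K (s, u)) volume := by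
    intro s
    by_cases hs : s ∈ Icc x L
    · rw [hslice_mem s hs]
      exact (integrable_indicator_iff measurableSet_Icc).2
        (integrableOn_const measure_Icc_lt_top.ne)
    · rw [hslice_nmem s hs]
      exact integrable_zero _ _ _
  have hval : ∀ s : ℝ, s ≠ 0 →
      (∫ u, K (s, u)) = (Icc x L).indicator (fun s => c^2 * Real.exp (-a * s)) s := by
    intro s hs0
    by_cases hs : s ∈ Icc x L
    · rw [hslice_mem s hs, MeasureTheory.integral_indicator measurableSet_Icc,
        setIntegral_const, measureReal_def, Real.volume_Icc, smul_eq_mul,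
        ENNReal.toReal_ofReal (by linarith [hx0.trans hs.1] : (0:ℝ) ≤ s - 0),
        Set.indicator_of_mem hs]
      field_simp
      ring
    · rw [hslice_nmem s hs, Set.indicator_of_notMem hs, integral_zero]
  have hnormval : ∀ s : ℝ, s ≠ 0 →
      (∫ u, ‖K (s, u)‖) = (Icc x L).indicator (fun s => c^2 * Real.exp (-a * s)) s := by
    intro s hs0
    have : (fun u => ‖K (s, u)‖) = fun u => K (s, u) :=
      funext fun u => Real.norm_of_nonneg (hK0 _)
    rw [this, hval s hs0]
  have hpsi_int : Integrable ((Icc x L).indicator (fun s => c^2 * Real.exp (-a * s))) volume :=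
    (integrable_indicator_iff measurableSet_Icc).2 ((continuous_const.mul (Real.continuous_exp.comp (continuous_const.mul continuous_id))).integrableOn_Icc)
  have haux : ∀ (f : ℝ → ℝ), (∀ s : ℝ, s ≠ 0 →
      f s = (Icc x L).indicator (fun s => c^2 * Real.exp (-a * s)) s) →
      f =ᵐ[volume] (Icc x L).indicator (fun s => c^2 * Real.exp (-a * s)) := by
    intro f hf
    have h0 : (volume : Measure ℝ) ({0} : Set ℝ) = 0 := Real.volume_singleton
    refine ae_iff.2 (measure_mono_null ?_ h0)
    intro s hs
    simp only [mem_setOf_eq] at hs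
    simp only [mem_singleton_iff]
    by_contra h
    exact hs (hf s h)
  have hKint : Integrable K (volume.prod volume) := by
    refine (integrable_prod_iff ((hGm.indicator hS2).aestronglyMeasurable)).2
      ⟨ae_of_all _ hint_slice, ?_⟩
    exact hpsi_int.congr (haux _ hnormval).symm
  have hT : MeasurePreserving (⇑shearEquiv) (volume.prod volume)
      ((volume : Measure ℝ).prod volume) := measurePreserving_prod_sub_swap volume volume
  calc (∫ p in S, F p) = ∫ p, S.indicator F p := (MeasureTheory.integral_indicator hS).symm
    _ = ∫ p, S.indicator F p ∂((volume : Measure ℝ).prod volume) := by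
        rw [← MeasureTheory.Measure.volume_eq_prod ℝ ℝ]
    _ = ∫ q, S.indicator F (shearEquiv q) ∂((volume : Measure ℝ).prod volume) :=
        (hT.integral_comp shearEquiv.measurableEmbedding _).symm
    _ = ∫ q, K q ∂((volume : Measure ℝ).prod volume) := by simp only [h4]
    _ = ∫ s, ∫ u, K (s, u) := MeasureTheory.integral_prod K hKint
    _ = ∫ s, (Icc x L).indicator (fun s => c^2 * Real.exp (-a * s)) s :=
        integral_congr_ae (haux _ hval)
    _ = ∫ s in Icc x L, c^2 * Real.exp (-a * s) :=
        MeasureTheory.integral_indicator measurableSet_Icc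

/-- the truncated exponential density `y_{a,Λ}` is a fixed point
of the operator `T_Λ` on `[0,Λ]`. -/
theorem truncExp_fixed_point_TLim (a L : ℝ) (ha : 0 < a) (hL : 0 < L) :
    ∀ x ∈ Icc (0:ℝ) L, TLim L (truncExp a L) x = truncExp a L x := by
  rintro x ⟨hx0, hxL⟩
  have hQ : Real.exp (-a * L) < 1 := by
    rw [Real.exp_lt_one_iff]; nlinarith
  have hQ0 : (0:ℝ) < 1 - Real.exp (-a * L) := by linarith
  set c : ℝ := a / (1 - Real.exp (-a * L)) with hc
  have hy : ∀ t : ℝ, truncExp a L t = c * Real.exp (-a * t) := by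
    intro t; rw [truncExp, hc]; ring
  rw [TLim, double_integral_eval a L x ha hL hx0 hxL]
  have h1 : ∫ s in Icc x L, (a / (1 - Real.exp (-a * L)))^2 * Real.exp (-a * s)
      = c^2 * ((Real.exp (-a * x) - Real.exp (-a * L)) / a) := by
    rw [MeasureTheory.integral_const_mul, integral_exp_neg_Icc a x L ha hxL, hc]
  have h2 : ∫ v in Icc (L - x) L, truncExp a L v
      = c * ((Real.exp (-a * (L - x)) - Real.exp (-a * L)) / a) := by
    simp_rw [hy]
    rw [MeasureTheory.integral_const_mul, integral_exp_neg_Icc a (L - x) L ha (by linarith)]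
  rw [h1, h2, hy, hc]
  set P := Real.exp (-a * x) with hP
  set Q := Real.exp (-a * L) with hQdef
  set R := Real.exp (-a * (L - x)) with hR
  have hPR : P * R = Q := by
    rw [hP, hR, hQdef, ← Real.exp_add]; congr 1; ring
  have hne : 1 - Q ≠ 0 := hQ0.ne'
  field_simp
  linear_combination hPR
end

section
/- For the perturbed operator T_K with kernel K(u,v,x) = Σ_{n=0}^N (n+1) aₙ (x/(u+v))ⁿ, and any nonnegative integrable function y on [0,∞), the L¹ norm satisfies ∫₀^∞ (T_K y)(x) dx = (∫₀^∞ y(x) dx)² · Σ_{n=0}^N aₙ. -/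
open MeasureTheory Set Real

/-- The perturbation kernel `K(u,v,x) = ∑_{n=0}^N (n+1) aₙ (x/(u+v))ⁿ`. -/
noncomputable def pertKernel (N : ℕ) (a : ℕ → ℝ) (u v x : ℝ) : ℝ :=
  ∑ n ∈ Finset.range (N + 1), ((n : ℝ) + 1) * a n * (x / (u + v)) ^ n

/-- The perturbed gas-like operator
`(T_K y)(x) = ∬_{u,v>0, u+v ≥ x} K(u,v,x) y(u) y(v)/(u+v) du dv`. -/
noncomputable def TK (N : ℕ) (a : ℕ → ℝ) (y : ℝ → ℝ) (x : ℝ) : ℝ :=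
  ∫ p in {p : ℝ × ℝ | 0 < p.1 ∧ 0 < p.2 ∧ x ≤ p.1 + p.2},
    pertKernel N a p.1 p.2 x * (y p.1 * y p.2 / (p.1 + p.2))

namespace NormTKAux

/-- the section set in `(u,v)`-space -/
def S (x : ℝ) : Set (ℝ × ℝ) := {p : ℝ × ℝ | 0 < p.1 ∧ 0 < p.2 ∧ x ≤ p.1 + p.2}

lemma measurableSet_S (x : ℝ) : MeasurableSet (S x) :=
  (measurableSet_lt measurable_const measurable_fst).inter
    ((measurableSet_lt measurable_const measurable_snd).inter
      (measurableSet_le measurable_const (measurable_fst.add measurable_snd)))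

/-- the full region in `(x,(u,v))`-space -/
def W : Set (ℝ × ℝ × ℝ) :=
  {q | 0 < q.2.1 ∧ 0 < q.2.2 ∧ 0 < q.1 ∧ q.1 ≤ q.2.1 + q.2.2}

lemma measurableSet_W : MeasurableSet W :=
  (measurableSet_lt measurable_const (measurable_fst.comp measurable_snd)).inter
    ((measurableSet_lt measurable_const (measurable_snd.comp measurable_snd)).inter
      ((measurableSet_lt measurable_const measurable_fst).inter
        (measurableSet_le measurable_fst
          ((measurable_fst.comp measurable_snd).add (measurable_snd.comp measurable_snd)))))

/-- the basic real integrand for power `n` -/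
noncomputable def h (n : ℕ) (y : ℝ → ℝ) (x : ℝ) (p : ℝ × ℝ) : ℝ :=
  (x / (p.1 + p.2)) ^ n * (y p.1 * y p.2 / (p.1 + p.2))

lemma measurable_h (n : ℕ) {y : ℝ → ℝ} (hmy : Measurable y) :
    Measurable (fun q : ℝ × ℝ × ℝ => h n y q.1 q.2) := by
  have hs : Measurable (fun q : ℝ × ℝ × ℝ => q.2.1 + q.2.2) :=
    (measurable_fst.comp measurable_snd).add (measurable_snd.comp measurable_snd)
  exact ((measurable_fst.div hs).pow_const n).mul
    (((hmy.comp (measurable_fst.comp measurable_snd)).mul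
      (hmy.comp (measurable_snd.comp measurable_snd))).div hs)

/-- the lifted `ℝ≥0∞`-valued integrand, cut off to the region `W` -/
noncomputable def F (n : ℕ) (y : ℝ → ℝ) (q : ℝ × ℝ × ℝ) : ENNReal :=
  W.indicator (fun q => ENNReal.ofReal (h n y q.1 q.2)) q

lemma measurable_F (n : ℕ) {y : ℝ → ℝ} (hmy : Measurable y) : Measurable (F n y) :=
  ((measurable_h n hmy).ennreal_ofReal).indicator measurableSet_W

lemma F_section_pos (n : ℕ) (y : ℝ → ℝ) {x : ℝ} (hx : 0 < x) :
    (fun p => F n y (x, p)) = (S x).indicator (fun p => ENNReal.ofReal (h n y x p)) := by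
  funext p
  by_cases hp : p ∈ S x
  · rw [indicator_of_mem hp]
    exact indicator_of_mem (show (x, p) ∈ W from ⟨hp.1, hp.2.1, hx, hp.2.2⟩) _
  · rw [indicator_of_notMem hp]
    exact indicator_of_notMem (fun hw => hp ⟨hw.1, hw.2.1, hw.2.2.2⟩) _

lemma inner_x (n : ℕ) (y : ℝ → ℝ) (hy0 : ∀ u, 0 ≤ y u) {u v : ℝ} (hu : 0 < u) (hv : 0 < v) :
    ∫⁻ x in Ioc 0 (u + v), ENNReal.ofReal ((x / (u + v)) ^ n * (y u * y v / (u + v)))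
      = ENNReal.ofReal (y u * y v / ((n : ℝ) + 1)) := by
  have hs : (0:ℝ) < u + v := by linarith
  set c : ℝ := y u * y v / (u + v) with hc
  have hc0 : 0 ≤ c := div_nonneg (mul_nonneg (hy0 u) (hy0 v)) hs.le
  have hcont : Continuous fun x : ℝ => (x / (u + v)) ^ n * c := by fun_prop
  have hint : IntegrableOn (fun x : ℝ => (x / (u + v)) ^ n * c) (Ioc 0 (u + v)) :=
    hcont.integrableOn_Ioc
  rw [← ofReal_integral_eq_lintegral_ofReal hint]
  · congr 1
    have hrw : ∀ x : ℝ, (x / (u + v)) ^ n * c = x ^ n * (((u + v) ^ n)⁻¹ * c) := by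
      intro x; rw [div_pow]; ring
    calc ∫ x in Ioc 0 (u + v), (x / (u + v)) ^ n * c
        = ∫ x in Ioc 0 (u + v), x ^ n * (((u + v) ^ n)⁻¹ * c) := by
          simp only [hrw]
      _ = (∫ x in (0:ℝ)..(u + v), x ^ n) * (((u + v) ^ n)⁻¹ * c) := by
          rw [intervalIntegral.integral_of_le hs.le, ← integral_mul_const]
      _ = ((u + v) ^ (n + 1) - 0 ^ (n + 1)) / ((n : ℝ) + 1) * (((u + v) ^ n)⁻¹ * c) := by
          rw [integral_pow]
      _ = y u * y v / ((n : ℝ) + 1) := by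
          rw [hc]
          have hn1 : ((n : ℝ) + 1) ≠ 0 := by positivity
          have hsn : ((u + v) : ℝ) ^ n ≠ 0 := pow_ne_zero _ hs.ne'
          field_simp
          ring
  · refine ae_restrict_of_forall_mem measurableSet_Ioc (fun x hx => ?_)
    exact mul_nonneg (pow_nonneg (div_nonneg hx.1.le hs.le) n) hc0

lemma lint_x (n : ℕ) (y : ℝ → ℝ) (hy0 : ∀ u, 0 ≤ y u) (p : ℝ × ℝ) :
    ∫⁻ x, F n y (x, p)
      = (Ioi (0:ℝ) ×ˢ Ioi (0:ℝ)).indicator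
          (fun p : ℝ × ℝ => ENNReal.ofReal (y p.1 * y p.2 / ((n : ℝ) + 1))) p := by
  by_cases hp : 0 < p.1 ∧ 0 < p.2
  · rw [indicator_of_mem (show p ∈ Ioi (0:ℝ) ×ˢ Ioi (0:ℝ) from ⟨hp.1, hp.2⟩)]
    have hsec : (fun x => F n y (x, p))
        = (Ioc 0 (p.1 + p.2)).indicator (fun x => ENNReal.ofReal (h n y x p)) := by
      funext x
      by_cases hx : x ∈ Ioc 0 (p.1 + p.2)
      · rw [indicator_of_mem hx]
        exact indicator_of_mem (show (x, p) ∈ W from ⟨hp.1, hp.2, hx.1, hx.2⟩) _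
      · rw [indicator_of_notMem hx]
        exact indicator_of_notMem (fun hw => hx ⟨hw.2.2.1, hw.2.2.2⟩) _
    rw [hsec, lintegral_indicator measurableSet_Ioc]
    exact inner_x n y hy0 hp.1 hp.2
  · rw [indicator_of_notMem (by simpa [Set.mem_prod] using hp)]
    have : ∀ x : ℝ, F n y (x, p) = 0 := by
      intro x
      refine indicator_of_notMem (fun hw => hp ⟨hw.1, hw.2.1⟩) _
    simp [this]

lemma lint_y_ofReal {y : ℝ → ℝ} (hy0 : ∀ u, 0 ≤ y u) (hy_int : IntegrableOn y (Ioi 0)) :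
    ∫⁻ u in Ioi (0:ℝ), ENNReal.ofReal (y u) = ENNReal.ofReal (∫ u in Ioi (0:ℝ), y u) :=
  (ofReal_integral_eq_lintegral_ofReal hy_int (Filter.Eventually.of_forall hy0)).symm

/-- The key lintegral identity, for each power `n`. -/
theorem key (n : ℕ) {y : ℝ → ℝ} (hmy : Measurable y) (hy0 : ∀ u, 0 ≤ y u)
    (hy_int : IntegrableOn y (Ioi 0)) :
    ∫⁻ x in Ioi (0:ℝ), ∫⁻ p, F n y (x, p)
      = ENNReal.ofReal ((∫ u in Ioi (0:ℝ), y u) ^ 2 / ((n : ℝ) + 1)) := by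
  set Y := ∫ u in Ioi (0:ℝ), y u with hY
  have hY0 : 0 ≤ Y := setIntegral_nonneg measurableSet_Ioi (fun u _ => hy0 u)
  have hzero : ∀ x ∉ Ioi (0:ℝ), (∫⁻ p, F n y (x, p)) = 0 := by
    intro x hx
    have : ∀ p : ℝ × ℝ, F n y (x, p) = 0 := fun p =>
      indicator_of_notMem (fun hw => hx (mem_Ioi.2 hw.2.2.1)) _
    simp [this]
  have h1 : ∫⁻ x in Ioi (0:ℝ), ∫⁻ p, F n y (x, p) = ∫⁻ x, ∫⁻ p, F n y (x, p) := by
    rw [← lintegral_indicator measurableSet_Ioi]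
    congr 1
    funext x
    by_cases hx : x ∈ Ioi (0:ℝ)
    · rw [indicator_of_mem hx]
    · rw [indicator_of_notMem hx, hzero x hx]
  rw [h1]
  have hswap : ∫⁻ x, ∫⁻ p, F n y (x, p) = ∫⁻ p : ℝ × ℝ, ∫⁻ x, F n y (x, p) := by
    refine lintegral_lintegral_swap ?_
    exact (measurable_F n hmy).aemeasurable
  rw [hswap]
  have h2 : ∫⁻ p : ℝ × ℝ, ∫⁻ x, F n y (x, p)
      = ∫⁻ p : ℝ × ℝ in Ioi (0:ℝ) ×ˢ Ioi (0:ℝ),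
          ENNReal.ofReal (y p.1 * y p.2 / ((n : ℝ) + 1)) := by
    rw [← lintegral_indicator (measurableSet_Ioi.prod measurableSet_Ioi)]
    exact lintegral_congr (lint_x n y hy0)
  rw [h2]
  have hrw : ∀ p : ℝ × ℝ, ENNReal.ofReal (y p.1 * y p.2 / ((n : ℝ) + 1))
      = ENNReal.ofReal (y p.1) * (ENNReal.ofReal (y p.2) * ENNReal.ofReal (1 / ((n : ℝ) + 1))) := by
    intro p
    rw [← ENNReal.ofReal_mul (hy0 p.2), ← ENNReal.ofReal_mul (hy0 p.1)]
    ring_nf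
  have h3 : ∫⁻ p : ℝ × ℝ in Ioi (0:ℝ) ×ˢ Ioi (0:ℝ),
        ENNReal.ofReal (y p.1 * y p.2 / ((n : ℝ) + 1))
      = (∫⁻ u in Ioi (0:ℝ), ENNReal.ofReal (y u)) *
          ((∫⁻ u in Ioi (0:ℝ), ENNReal.ofReal (y u)) * ENNReal.ofReal (1 / ((n : ℝ) + 1))) := by
    simp only [hrw]
    rw [Measure.volume_eq_prod, ← Measure.prod_restrict,
      lintegral_prod_mul hmy.ennreal_ofReal.aemeasurable
        (hmy.ennreal_ofReal.mul_const _).aemeasurable,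
      lintegral_mul_const _ hmy.ennreal_ofReal]
  rw [h3, lint_y_ofReal hy0 hy_int, ← hY,
    ← ENNReal.ofReal_mul hY0, ← ENNReal.ofReal_mul hY0]
  congr 1
  rw [sq]
  ring

/-- the Bochner integrand for power `n` -/
noncomputable def B (n : ℕ) (y : ℝ → ℝ) (x : ℝ) : ℝ := ∫ p in S x, h n y x p

lemma measurable_g (n : ℕ) {y : ℝ → ℝ} (hmy : Measurable y) :
    Measurable (fun x => ∫⁻ p, F n y (x, p)) :=
  Measurable.lintegral_prod_right (measurable_F n hmy)

lemma h_nonneg_on (n : ℕ) {y : ℝ → ℝ} (hy0 : ∀ u, 0 ≤ y u) {x : ℝ} (hx : 0 < x)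
    {p : ℝ × ℝ} (hp : p ∈ S x) : 0 ≤ h n y x p := by
  have hs : (0:ℝ) < p.1 + p.2 := by have := hp.1; have := hp.2.1; linarith
  exact mul_nonneg (pow_nonneg (div_nonneg hx.le hs.le) n)
    (div_nonneg (mul_nonneg (hy0 _) (hy0 _)) hs.le)

lemma B_eq_toReal (n : ℕ) {y : ℝ → ℝ} (hmy : Measurable y) (hy0 : ∀ u, 0 ≤ y u)
    {x : ℝ} (hx : 0 < x) :
    B n y x = (∫⁻ p, F n y (x, p)).toReal := by
  rw [F_section_pos n y hx, lintegral_indicator (measurableSet_S x)]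
  rw [B, integral_eq_lintegral_of_nonneg_ae]
  · exact ae_restrict_of_forall_mem (measurableSet_S x) (fun p hp => h_nonneg_on n hy0 hx hp)
  · exact ((measurable_h n hmy).comp (measurable_prodMk_left (x := x))).aestronglyMeasurable

theorem B_integral (n : ℕ) {y : ℝ → ℝ} (hmy : Measurable y) (hy0 : ∀ u, 0 ≤ y u)
    (hy_int : IntegrableOn y (Ioi 0)) :
    IntegrableOn (B n y) (Ioi 0) ∧
      ∫ x in Ioi (0:ℝ), B n y x = (∫ u in Ioi (0:ℝ), y u) ^ 2 / ((n : ℝ) + 1) := by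
  set g := fun x => ∫⁻ p, F n y (x, p) with hg
  have hgm : Measurable g := measurable_g n hmy
  have hkey := key n hmy hy0 hy_int
  have hne : (∫⁻ x in Ioi (0:ℝ), g x) ≠ ⊤ := by rw [hkey]; exact ENNReal.ofReal_ne_top
  have hint : Integrable (fun x => (g x).toReal) (volume.restrict (Ioi 0)) :=
    integrable_toReal_of_lintegral_ne_top hgm.aemeasurable hne
  have heq : ∀ x ∈ Ioi (0:ℝ), B n y x = (g x).toReal := fun x hx =>
    B_eq_toReal n hmy hy0 (mem_Ioi.1 hx)
  have haeeq : B n y =ᶠ[ae (volume.restrict (Ioi 0))] fun x => (g x).toReal := by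
    filter_upwards [ae_restrict_mem measurableSet_Ioi] with x hx using heq x hx
  constructor
  · exact hint.congr haeeq.symm
  · rw [integral_congr_ae haeeq, integral_toReal hgm.aemeasurable
      (ae_lt_top hgm hne), hkey, ENNReal.toReal_ofReal (by positivity)]

lemma ae_fin {y : ℝ → ℝ} (hmy : Measurable y) (hy0 : ∀ u, 0 ≤ y u)
    (hy_int : IntegrableOn y (Ioi 0)) :
    ∀ᵐ x ∂(volume.restrict (Ioi (0:ℝ))), ∀ n : ℕ, (∫⁻ p, F n y (x, p)) < ⊤ := by
  rw [ae_all_iff]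
  intro n
  exact ae_lt_top (measurable_g n hmy)
    (by rw [key n hmy hy0 hy_int]; exact ENNReal.ofReal_ne_top)

/-- the main theorem, for measurable `y`. -/
theorem main (N : ℕ) (a : ℕ → ℝ) {y : ℝ → ℝ} (hmy : Measurable y)
    (hy0 : ∀ u, 0 ≤ y u) (hy_int : IntegrableOn y (Ioi 0)) :
    (∫ x in Ioi (0:ℝ), TK N a y x) =
      (∫ x in Ioi (0:ℝ), y x) ^ 2 * ∑ n ∈ Finset.range (N + 1), a n := by
  set Y := ∫ u in Ioi (0:ℝ), y u with hY
  -- pointwise (a.e.) decomposition of TK into the B-pieces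
  have hTK : TK N a y =ᶠ[ae (volume.restrict (Ioi (0:ℝ)))]
      fun x => ∑ n ∈ Finset.range (N + 1), ((n : ℝ) + 1) * a n * B n y x := by
    filter_upwards [ae_restrict_mem measurableSet_Ioi, ae_fin hmy hy0 hy_int] with x hx hfin
    have hx0 : (0:ℝ) < x := mem_Ioi.1 hx
    have hint : ∀ n ∈ Finset.range (N + 1),
        IntegrableOn (fun p => ((n : ℝ) + 1) * a n * h n y x p) (S x) := by
      intro n _
      refine Integrable.const_mul ?_ _
      refine ⟨((measurable_h n hmy).comp (measurable_prodMk_left (x := x))).aestronglyMeasurable, ?_⟩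
      rw [hasFiniteIntegral_iff_ofReal
        (ae_restrict_of_forall_mem (measurableSet_S x) (fun p hp => h_nonneg_on n hy0 hx0 hp))]
      have : (∫⁻ p in S x, ENNReal.ofReal (h n y x p)) = ∫⁻ p, F n y (x, p) := by
        rw [F_section_pos n y hx0, lintegral_indicator (measurableSet_S x)]
      rw [this]
      exact hfin n
    have hpt : ∀ p : ℝ × ℝ, pertKernel N a p.1 p.2 x * (y p.1 * y p.2 / (p.1 + p.2))
        = ∑ n ∈ Finset.range (N + 1), ((n : ℝ) + 1) * a n * h n y x p := by
      intro p
      rw [pertKernel, Finset.sum_mul]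
      exact Finset.sum_congr rfl (fun n _ => by rw [h]; ring)
    calc TK N a y x = ∫ p in S x, ∑ n ∈ Finset.range (N + 1),
          ((n : ℝ) + 1) * a n * h n y x p := by
          rw [TK]; exact integral_congr_ae (Filter.Eventually.of_forall (fun p => hpt p))
      _ = ∑ n ∈ Finset.range (N + 1), ∫ p in S x, ((n : ℝ) + 1) * a n * h n y x p :=
          integral_finset_sum _ hint
      _ = ∑ n ∈ Finset.range (N + 1), ((n : ℝ) + 1) * a n * B n y x :=
          Finset.sum_congr rfl (fun n _ => by rw [integral_const_mul]; rfl)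
  rw [integral_congr_ae hTK, integral_finset_sum _
    (fun n _ => ((B_integral n hmy hy0 hy_int).1.const_mul _))]
  have : ∀ n ∈ Finset.range (N + 1),
      ∫ x in Ioi (0:ℝ), ((n : ℝ) + 1) * a n * B n y x = Y ^ 2 * a n := by
    intro n _
    rw [integral_const_mul, (B_integral n hmy hy0 hy_int).2, ← hY]
    have hn1 : ((n : ℝ) + 1) ≠ 0 := by positivity
    field_simp
  rw [Finset.sum_congr rfl this, ← Finset.mul_sum]

end NormTKAux

/-- for the perturbed operator `T_K`,
`‖T_K y‖ = ‖y‖² ∑_{n=0}^N aₙ`. -/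
theorem norm_TK_eq (N : ℕ) (a : ℕ → ℝ)
    (y : ℝ → ℝ) (hy_nonneg : ∀ x, 0 ≤ y x)
    (hy_int : IntegrableOn y (Ioi 0)) :
    (∫ x in Ioi (0:ℝ), TK N a y x) =
      (∫ x in Ioi (0:ℝ), y x) ^ 2 * ∑ n ∈ Finset.range (N + 1), a n := by
  classical
  -- replace `y` by a measurable nonnegative representative
  set m := hy_int.aestronglyMeasurable with hm
  set y' : ℝ → ℝ := fun u => max (m.mk y u) 0 with hy'
  have hmy' : Measurable y' := (m.stronglyMeasurable_mk.measurable).max measurable_const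
  have hy'0 : ∀ u, 0 ≤ y' u := fun u => le_max_right _ _
  have heq : y =ᶠ[ae (volume.restrict (Ioi (0:ℝ)))] y' := by
    filter_upwards [m.ae_eq_mk] with u hu
    rw [hy']
    dsimp only
    rw [← hu, max_eq_left (hy_nonneg u)]
  have hy'_int : IntegrableOn y' (Ioi 0) := hy_int.congr heq
  -- the exceptional null set
  set E : Set ℝ := {u | ¬ y u = y' u} ∩ Ioi 0 with hE
  have hE0 : volume E = 0 := by
    have := heq
    rw [Filter.EventuallyEq, ae_iff, Measure.restrict_apply' measurableSet_Ioi] at this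
    exact this
  have hbad : volume ((E ×ˢ (univ : Set ℝ)) ∪ ((univ : Set ℝ) ×ˢ E)) = 0 :=
    measure_union_null
      (by rw [Measure.volume_eq_prod, Measure.prod_prod, hE0, zero_mul])
      (by rw [Measure.volume_eq_prod, Measure.prod_prod, hE0, mul_zero])
  have hbad_ae : ∀ᵐ p : ℝ × ℝ, p ∉ ((E ×ˢ (univ : Set ℝ)) ∪ ((univ : Set ℝ) ×ˢ E)) := by
    rw [← measure_eq_zero_iff_ae_notMem] at *
    exact hbad
  -- TK is insensitive to the modification
  have hTKeq : ∀ x : ℝ, TK N a y x = TK N a y' x := by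
    intro x
    rw [TK, TK]
    refine integral_congr_ae ?_
    filter_upwards [ae_restrict_of_ae hbad_ae,
      ae_restrict_mem (NormTKAux.measurableSet_S x)] with p hp hpS
    have h1 : y p.1 = y' p.1 := by
      by_contra hne
      exact hp (Or.inl ⟨⟨hne, hpS.1⟩, trivial⟩)
    have h2 : y p.2 = y' p.2 := by
      by_contra hne
      exact hp (Or.inr ⟨trivial, hne, hpS.2.1⟩)
    rw [h1, h2]
  have hInt : ∫ x in Ioi (0:ℝ), y x = ∫ x in Ioi (0:ℝ), y' x := integral_congr_ae heq
  calc (∫ x in Ioi (0:ℝ), TK N a y x) = ∫ x in Ioi (0:ℝ), TK N a y' x := by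
        refine integral_congr_ae (Filter.Eventually.of_forall (fun x => hTKeq x))
    _ = (∫ x in Ioi (0:ℝ), y' x) ^ 2 * ∑ n ∈ Finset.range (N + 1), a n :=
        NormTKAux.main N a hmy' hy'0 hy'_int
    _ = (∫ x in Ioi (0:ℝ), y x) ^ 2 * ∑ n ∈ Finset.range (N + 1), a n := by rw [hInt]
end

section
/- For the perturbed operator T_K with kernel K(u,v,x) = Σ_{n=0}^N (n+1) aₙ (x/(u+v))ⁿ, and any nonnegative integrable function y on [0,∞) with ∫₀^∞ y(x) dx = 1 and finite mean, the mean of T_K y satisfies ∫₀^∞ x (T_K y)(x) dx = 2 (∫₀^∞ x y(x) dx) · Σ_{n=0}^N ((n+1)/(n+2)) aₙ. -/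
open MeasureTheory Set Real
open scoped ENNReal NNReal

noncomputable section MeanTKAux

variable (y : ℝ → ℝ)

/-- Auxiliary integrand: `x · (x/(u+v))^n · y(u)y(v)/(u+v)` cut off to `x ≤ u+v`. -/
def meanTKF (n : ℕ) : ℝ × ℝ × ℝ → ℝ := fun z =>
  {w : ℝ × ℝ × ℝ | w.1 ≤ w.2.1 + w.2.2}.indicator
    (fun w => w.1 * (w.1 / (w.2.1 + w.2.2)) ^ n *
      (y w.2.1 * y w.2.2 / (w.2.1 + w.2.2))) z

lemma meanTKF_measurableSet :
    MeasurableSet {w : ℝ × ℝ × ℝ | w.1 ≤ w.2.1 + w.2.2} :=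
  measurableSet_le measurable_fst
    ((measurable_fst.comp measurable_snd).add (measurable_snd.comp measurable_snd))

lemma meanTKF_aesm (hy : AEStronglyMeasurable y (volume.restrict (Ioi (0:ℝ)))) (n : ℕ) :
    AEStronglyMeasurable (meanTKF y n)
      ((volume.restrict (Ioi (0:ℝ))).prod
        ((volume.restrict (Ioi (0:ℝ))).prod (volume.restrict (Ioi (0:ℝ))))) := by
  apply AEStronglyMeasurable.indicator _ (meanTKF_measurableSet)
  have h1 : AEStronglyMeasurable (fun p : ℝ × ℝ => y p.1 * y p.2)
      ((volume.restrict (Ioi (0:ℝ))).prod (volume.restrict (Ioi (0:ℝ)))) :=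
    hy.comp_fst.mul hy.comp_snd
  have h2 : AEStronglyMeasurable (fun w : ℝ × ℝ × ℝ => y w.2.1 * y w.2.2)
      ((volume.restrict (Ioi (0:ℝ))).prod
        ((volume.restrict (Ioi (0:ℝ))).prod (volume.restrict (Ioi (0:ℝ))))) := h1.comp_snd
  have h3 : Measurable fun w : ℝ × ℝ × ℝ =>
      w.1 * (w.1 / (w.2.1 + w.2.2)) ^ n / (w.2.1 + w.2.2) := by fun_prop
  refine (h3.aestronglyMeasurable.mul h2).congr
    (Filter.Eventually.of_forall fun w => ?_)
  simp only [Pi.mul_apply]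
  ring

lemma meanTK_prodInt (hy_int : IntegrableOn y (Ioi 0))
    (hy_mean : IntegrableOn (fun x => x * y x) (Ioi 0)) :
    Integrable (fun p : ℝ × ℝ => (p.1 + p.2) * (y p.1 * y p.2))
      ((volume.restrict (Ioi (0:ℝ))).prod (volume.restrict (Ioi (0:ℝ)))) := by
  have h1 : Integrable (fun p : ℝ × ℝ => (p.1 * y p.1) * y p.2)
      ((volume.restrict (Ioi (0:ℝ))).prod (volume.restrict (Ioi (0:ℝ)))) :=
    hy_mean.mul_prod hy_int
  have h2 : Integrable (fun p : ℝ × ℝ => y p.1 * (p.2 * y p.2))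
      ((volume.restrict (Ioi (0:ℝ))).prod (volume.restrict (Ioi (0:ℝ)))) :=
    hy_int.mul_prod hy_mean
  refine (h1.add h2).congr (Filter.Eventually.of_forall fun p => ?_)
  simp only [Pi.add_apply]
  ring

lemma meanTK_ae_mem :
    ∀ᵐ p ∂((volume.restrict (Ioi (0:ℝ))).prod (volume.restrict (Ioi (0:ℝ)))),
      0 < p.1 ∧ 0 < p.2 := by
  rw [Measure.prod_restrict]
  filter_upwards [ae_restrict_mem (measurableSet_Ioi.prod measurableSet_Ioi)] with p hp
  exact ⟨hp.1, hp.2⟩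

lemma meanTKF_hfi (hy_nonneg : ∀ x, 0 ≤ y x)
    (hy_int : IntegrableOn y (Ioi 0))
    (hy_mean : IntegrableOn (fun x => x * y x) (Ioi 0)) (n : ℕ) :
    HasFiniteIntegral (meanTKF y n)
      ((volume.restrict (Ioi (0:ℝ))).prod
        ((volume.restrict (Ioi (0:ℝ))).prod (volume.restrict (Ioi (0:ℝ))))) := by
  set μ2 := (volume.restrict (Ioi (0:ℝ))).prod (volume.restrict (Ioi (0:ℝ))) with hμ2
  rw [hasFiniteIntegral_def]
  rw [lintegral_prod_symm _ (meanTKF_aesm y hy_int.aestronglyMeasurable n).enorm]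
  have key : ∀ᵐ p ∂μ2,
      (∫⁻ x in Ioi (0:ℝ), (‖meanTKF y n (x, p)‖₊ : ℝ≥0∞)) ≤
        ENNReal.ofReal ((p.1 + p.2) * (y p.1 * y p.2)) := by
    filter_upwards [meanTK_ae_mem] with p hp
    obtain ⟨hu, hv⟩ := hp
    have hs : (0:ℝ) < p.1 + p.2 := by linarith
    have hc : (0:ℝ) ≤ y p.1 * y p.2 := mul_nonneg (hy_nonneg _) (hy_nonneg _)
    calc (∫⁻ x in Ioi (0:ℝ), (‖meanTKF y n (x, p)‖₊ : ℝ≥0∞))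
        ≤ ∫⁻ x in Ioi (0:ℝ),
            (Ioc (0:ℝ) (p.1 + p.2)).indicator
              (fun _ => ENNReal.ofReal (y p.1 * y p.2)) x := by
          apply lintegral_mono_ae
          filter_upwards [ae_restrict_mem measurableSet_Ioi] with x hx
          by_cases hxs : x ≤ p.1 + p.2
          · rw [Set.indicator_of_mem (show x ∈ Ioc (0:ℝ) (p.1 + p.2) from ⟨hx, hxs⟩)]
            have hval : meanTKF y n (x, p) =
                x * (x / (p.1 + p.2)) ^ n * (y p.1 * y p.2 / (p.1 + p.2)) := by
              simp only [meanTKF, Set.indicator_apply, Set.mem_setOf_eq, if_pos hxs]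
            rw [hval, ← enorm_eq_nnnorm, ← ofReal_norm]
            apply ENNReal.ofReal_le_ofReal
            have hr0 : (0:ℝ) ≤ x * (x / (p.1 + p.2)) ^ n * (y p.1 * y p.2 / (p.1 + p.2)) := by
              have hx' := (show (0:ℝ) < x from hx).le
              have h1 := hy_nonneg p.1
              have h2 := hy_nonneg p.2
              positivity
            rw [Real.norm_eq_abs, abs_of_nonneg hr0]
            have heq : x * (x / (p.1 + p.2)) ^ n * (y p.1 * y p.2 / (p.1 + p.2)) =
                (x / (p.1 + p.2)) ^ (n + 1) * (y p.1 * y p.2) := by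
              ring
            rw [heq]
            have hle1 : (x / (p.1 + p.2)) ^ (n + 1) ≤ 1 :=
              pow_le_one₀ (div_nonneg (le_of_lt hx) hs.le) ((div_le_one hs).mpr hxs)
            calc (x / (p.1 + p.2)) ^ (n + 1) * (y p.1 * y p.2)
                ≤ 1 * (y p.1 * y p.2) := mul_le_mul_of_nonneg_right hle1 hc
              _ = y p.1 * y p.2 := one_mul _
          · have hval : meanTKF y n (x, p) = 0 := by
              simp only [meanTKF, Set.indicator_apply, Set.mem_setOf_eq, if_neg hxs]
            simp [hval]
      _ = ENNReal.ofReal (y p.1 * y p.2) * ENNReal.ofReal (p.1 + p.2) := by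
          rw [lintegral_indicator measurableSet_Ioc, setLIntegral_const,
            Measure.restrict_apply measurableSet_Ioc,
            Set.inter_eq_left.mpr Ioc_subset_Ioi_self, Real.volume_Ioc]
          simp
      _ ≤ ENNReal.ofReal ((p.1 + p.2) * (y p.1 * y p.2)) := by
          rw [← ENNReal.ofReal_mul hc, mul_comm]
  calc (∫⁻ p, (∫⁻ x in Ioi (0:ℝ), (‖meanTKF y n (x, p)‖₊ : ℝ≥0∞)) ∂μ2)
      ≤ ∫⁻ p, ENNReal.ofReal ((p.1 + p.2) * (y p.1 * y p.2)) ∂μ2 := lintegral_mono_ae key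
    _ ≤ ∫⁻ p, (‖(p.1 + p.2) * (y p.1 * y p.2)‖₊ : ℝ≥0∞) ∂μ2 :=
        lintegral_mono fun p => Real.ofReal_le_enorm _
    _ < ⊤ := (meanTK_prodInt y hy_int hy_mean).2

lemma meanTKF_inner (n : ℕ) (p : ℝ × ℝ) (hu : 0 < p.1) (hv : 0 < p.2) :
    (∫ x in Ioi (0:ℝ), meanTKF y n (x, p)) =
      (p.1 + p.2) * (y p.1 * y p.2) / ((n : ℝ) + 2) := by
  have hs : (0:ℝ) < p.1 + p.2 := by linarith
  have h1 : (fun x => meanTKF y n (x, p)) =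
      (Iic (p.1 + p.2)).indicator
        (fun x => x ^ (n + 1) * (y p.1 * y p.2 / (p.1 + p.2) ^ (n + 1))) := by
    funext x
    by_cases hxs : x ≤ p.1 + p.2
    · simp only [meanTKF, Set.indicator_apply, Set.mem_setOf_eq, mem_Iic, if_pos hxs]
      have hne := hs.ne'
      rw [div_pow]
      field_simp
      ring
    · simp [meanTKF, Set.indicator_apply, hxs, mem_Iic]
  rw [h1, integral_indicator measurableSet_Iic,
    Measure.restrict_restrict measurableSet_Iic, Set.Iic_inter_Ioi,
    integral_mul_const, ← intervalIntegral.integral_of_le hs.le, integral_pow]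
  have hne : (p.1 + p.2) ≠ 0 := hs.ne'
  have hne2 : ((n:ℝ) + 1 + 1) ≠ 0 := by positivity
  have hpow : (p.1 + p.2) ^ (n + 1 + 1) = (p.1 + p.2) ^ (n + 1) * (p.1 + p.2) := pow_succ _ _
  rw [hpow]
  push_cast
  field_simp
  ring

lemma meanTK_outer (hy_int : IntegrableOn y (Ioi 0))
    (hy_norm : (∫ x in Ioi (0:ℝ), y x) = 1)
    (hy_mean : IntegrableOn (fun x => x * y x) (Ioi 0)) :
    (∫ p, (p.1 + p.2) * (y p.1 * y p.2)
        ∂((volume.restrict (Ioi (0:ℝ))).prod (volume.restrict (Ioi (0:ℝ))))) =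
      2 * ∫ x in Ioi (0:ℝ), x * y x := by
  have h : (fun p : ℝ × ℝ => (p.1 + p.2) * (y p.1 * y p.2)) =
      fun p => (p.1 * y p.1) * y p.2 + y p.1 * (p.2 * y p.2) := by
    funext p; ring
  have e1 := integral_prod_mul (μ := volume.restrict (Ioi (0:ℝ)))
    (ν := volume.restrict (Ioi (0:ℝ))) (f := fun x => x * y x) (g := y)
  have e2 := integral_prod_mul (μ := volume.restrict (Ioi (0:ℝ)))
    (ν := volume.restrict (Ioi (0:ℝ))) (f := y) (g := fun x => x * y x)
  rw [h, integral_add (hy_mean.mul_prod hy_int) (hy_int.mul_prod hy_mean), e1, e2, hy_norm]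
  ring

lemma meanTK_slice (N : ℕ) (a : ℕ → ℝ) (hy_nonneg : ∀ x, 0 ≤ y x)
    (hy_int : IntegrableOn y (Ioi 0)) (x : ℝ) (hx : x ∈ Ioi (0:ℝ)) :
    x * TK N a y x = ∑ n ∈ Finset.range (N + 1), ((n : ℝ) + 1) * a n *
      ∫ p, meanTKF y n (x, p)
        ∂((volume.restrict (Ioi (0:ℝ))).prod (volume.restrict (Ioi (0:ℝ)))) := by
  set μ2 := (volume.restrict (Ioi (0:ℝ))).prod (volume.restrict (Ioi (0:ℝ))) with hμ2
  have hxpos : (0:ℝ) < x := hx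
  set S : Set (ℝ × ℝ) := {p : ℝ × ℝ | x ≤ p.1 + p.2} with hS
  have hSmeas : MeasurableSet S :=
    measurableSet_le measurable_const (measurable_fst.add measurable_snd)
  have hA : {p : ℝ × ℝ | 0 < p.1 ∧ 0 < p.2 ∧ x ≤ p.1 + p.2} =
      S ∩ (Ioi (0:ℝ) ×ˢ Ioi (0:ℝ)) := by
    ext p
    simp only [Set.mem_setOf_eq, Set.mem_inter_iff, Set.mem_prod, Set.mem_Ioi, hS]
    tauto
  have hrestr : (volume : Measure (ℝ × ℝ)).restrict
      {p : ℝ × ℝ | 0 < p.1 ∧ 0 < p.2 ∧ x ≤ p.1 + p.2} = μ2.restrict S := by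
    rw [hμ2, Measure.prod_restrict, Measure.restrict_restrict hSmeas,
      ← Measure.volume_eq_prod, hA]
  have hyy : Integrable (fun p : ℝ × ℝ => y p.1 * y p.2) μ2 := hy_int.mul_prod hy_int
  have haesm : ∀ n : ℕ, AEStronglyMeasurable
      (fun p : ℝ × ℝ => x * (x / (p.1 + p.2)) ^ n * (y p.1 * y p.2 / (p.1 + p.2)))
      (μ2.restrict S) := by
    intro n
    have h3 : Measurable fun p : ℝ × ℝ =>
        x * (x / (p.1 + p.2)) ^ n / (p.1 + p.2) := by fun_prop
    have h2 : AEStronglyMeasurable (fun p : ℝ × ℝ => y p.1 * y p.2) (μ2.restrict S) :=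
      hyy.aestronglyMeasurable.mono_measure Measure.restrict_le_self
    refine (h3.aestronglyMeasurable.mul h2).congr (Filter.Eventually.of_forall fun p => ?_)
    simp only [Pi.mul_apply]
    ring
  have hae_mem : ∀ᵐ p ∂(μ2.restrict S), 0 < p.1 ∧ 0 < p.2 := by
    rw [hμ2, Measure.prod_restrict, Measure.restrict_restrict hSmeas]
    filter_upwards [ae_restrict_mem (hSmeas.inter (measurableSet_Ioi.prod measurableSet_Ioi))]
      with p hp
    exact ⟨hp.2.1, hp.2.2⟩
  have hIntOn : ∀ n : ℕ, Integrable
      (fun p : ℝ × ℝ => x * (x / (p.1 + p.2)) ^ n * (y p.1 * y p.2 / (p.1 + p.2)))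
      (μ2.restrict S) := by
    intro n
    refine Integrable.mono' (hyy.restrict (s := S)) (haesm n) ?_
    filter_upwards [ae_restrict_mem hSmeas, hae_mem] with p hpS hp0
    obtain ⟨hu, hv⟩ := hp0
    have hs : (0:ℝ) < p.1 + p.2 := by linarith
    have hxs : x ≤ p.1 + p.2 := hpS
    have hc : (0:ℝ) ≤ y p.1 * y p.2 := mul_nonneg (hy_nonneg _) (hy_nonneg _)
    have hr0 : (0:ℝ) ≤ x * (x / (p.1 + p.2)) ^ n * (y p.1 * y p.2 / (p.1 + p.2)) := by
      positivity
    rw [Real.norm_eq_abs, abs_of_nonneg hr0]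
    have heq : x * (x / (p.1 + p.2)) ^ n * (y p.1 * y p.2 / (p.1 + p.2)) =
        (x / (p.1 + p.2)) ^ (n + 1) * (y p.1 * y p.2) := by ring
    rw [heq]
    have hle1 : (x / (p.1 + p.2)) ^ (n + 1) ≤ 1 :=
      pow_le_one₀ (div_nonneg hxpos.le hs.le) ((div_le_one hs).mpr hxs)
    calc (x / (p.1 + p.2)) ^ (n + 1) * (y p.1 * y p.2)
        ≤ 1 * (y p.1 * y p.2) := mul_le_mul_of_nonneg_right hle1 hc
      _ = y p.1 * y p.2 := one_mul _
  have hind : ∀ n : ℕ, (fun p : ℝ × ℝ => meanTKF y n (x, p)) =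
      S.indicator (fun p : ℝ × ℝ =>
        x * (x / (p.1 + p.2)) ^ n * (y p.1 * y p.2 / (p.1 + p.2))) := by
    intro n
    funext p
    by_cases hp : x ≤ p.1 + p.2
    · simp only [meanTKF, Set.indicator_apply, Set.mem_setOf_eq, hS, if_pos hp]
    · simp only [meanTKF, Set.indicator_apply, Set.mem_setOf_eq, hS, if_neg hp]
  rw [TK, hrestr, ← integral_const_mul]
  have hxg : (fun p : ℝ × ℝ =>
      x * (pertKernel N a p.1 p.2 x * (y p.1 * y p.2 / (p.1 + p.2)))) =
      fun p : ℝ × ℝ => ∑ n ∈ Finset.range (N + 1), ((n : ℝ) + 1) * a n *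
        (x * (x / (p.1 + p.2)) ^ n * (y p.1 * y p.2 / (p.1 + p.2))) := by
    funext p
    rw [pertKernel, Finset.sum_mul, Finset.mul_sum]
    exact Finset.sum_congr rfl fun n _ => by ring
  rw [hxg, integral_finset_sum _ (fun n _ => (hIntOn n).const_mul _)]
  refine Finset.sum_congr rfl fun n _ => ?_
  rw [integral_const_mul, hind n, integral_indicator hSmeas]

end MeanTKAux

/-- for the perturbed operator `T_K` and a PDF `y` with finite
mean, `<x>_{T_K y} = 2 <x>_y ∑_{n=0}^N ((n+1)/(n+2)) aₙ`. -/
theorem mean_TK_eq (N : ℕ) (a : ℕ → ℝ)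
    (y : ℝ → ℝ) (hy_nonneg : ∀ x, 0 ≤ y x)
    (hy_int : IntegrableOn y (Ioi 0))
    (hy_norm : (∫ x in Ioi (0:ℝ), y x) = 1)
    (hy_mean : IntegrableOn (fun x => x * y x) (Ioi 0)) :
    (∫ x in Ioi (0:ℝ), x * TK N a y x) =
      2 * (∫ x in Ioi (0:ℝ), x * y x) *
        ∑ n ∈ Finset.range (N + 1), ((n : ℝ) + 1) / ((n : ℝ) + 2) * a n := by
  have hy := hy_int.aestronglyMeasurable
  have IntF : ∀ n : ℕ, Integrable (meanTKF y n)
      ((volume.restrict (Ioi (0:ℝ))).prod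
        ((volume.restrict (Ioi (0:ℝ))).prod (volume.restrict (Ioi (0:ℝ))))) :=
    fun n => ⟨meanTKF_aesm y hy n, meanTKF_hfi y hy_nonneg hy_int hy_mean n⟩
  have step1 : (∫ x in Ioi (0:ℝ), x * TK N a y x) =
      ∫ x in Ioi (0:ℝ), ∑ n ∈ Finset.range (N + 1), ((n : ℝ) + 1) * a n *
        ∫ p, meanTKF y n (x, p)
          ∂((volume.restrict (Ioi (0:ℝ))).prod (volume.restrict (Ioi (0:ℝ)))) := by
    refine integral_congr_ae ?_
    filter_upwards [ae_restrict_mem measurableSet_Ioi] with x hx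
    exact meanTK_slice y N a hy_nonneg hy_int x hx
  rw [step1,
    integral_finset_sum _ (fun n _ => ((IntF n).integral_prod_left).const_mul _)]
  have step2 : ∀ n ∈ Finset.range (N + 1),
      (∫ x in Ioi (0:ℝ), ((n : ℝ) + 1) * a n *
        ∫ p, meanTKF y n (x, p)
          ∂((volume.restrict (Ioi (0:ℝ))).prod (volume.restrict (Ioi (0:ℝ))))) =
      ((n : ℝ) + 1) * a n *
        (2 * (∫ x in Ioi (0:ℝ), x * y x) / ((n : ℝ) + 2)) := by
    intro n _
    rw [integral_const_mul]
    congr 1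
    have hswap : (∫ x in Ioi (0:ℝ), ∫ p, meanTKF y n (x, p)
          ∂((volume.restrict (Ioi (0:ℝ))).prod (volume.restrict (Ioi (0:ℝ))))) =
        ∫ p, (∫ x in Ioi (0:ℝ), meanTKF y n (x, p))
          ∂((volume.restrict (Ioi (0:ℝ))).prod (volume.restrict (Ioi (0:ℝ)))) :=
      integral_integral_swap (f := fun x p => meanTKF y n (x, p)) (IntF n)
    rw [hswap]
    have hinner : ∀ᵐ p
        ∂((volume.restrict (Ioi (0:ℝ))).prod (volume.restrict (Ioi (0:ℝ)))),
        (∫ x in Ioi (0:ℝ), meanTKF y n (x, p)) =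
          (p.1 + p.2) * (y p.1 * y p.2) / ((n : ℝ) + 2) := by
      filter_upwards [meanTK_ae_mem] with p hp
      exact meanTKF_inner y n p hp.1 hp.2
    rw [integral_congr_ae hinner, integral_div,
      meanTK_outer y hy_int hy_norm hy_mean]
  rw [Finset.sum_congr rfl step2, Finset.mul_sum]
  refine Finset.sum_congr rfl fun n _ => ?_
  have h2 : ((n : ℝ) + 2) ≠ 0 := by positivity
  field_simp
end

section
/- For the perturbed operator T_K with the N = 2 kernel K(u,v,x) = 1 − ε/3 + 2εx/(u+v) − 2εx²/(u+v)² with ε ≠ 0, the exponential distribution is no longer a fixed point: for any a > 0, the function y(x) = a e^{−ax} satisfies T_K y ≠ y, i.e. there exists x ≥ 0 with (T_K y)(x) ≠ a e^{−ax}. -/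
open MeasureTheory Set Real

/-- The `N = 2` perturbation kernel
`K(u,v,x) = 1 - ε/3 + 2εx/(u+v) - 2εx²/(u+v)²`. -/
noncomputable def pertK2 (ε u v x : ℝ) : ℝ :=
  1 - ε / 3 + 2 * ε * x / (u + v) - 2 * ε * x ^ 2 / (u + v) ^ 2

/-- The perturbed gas-like operator with the `N = 2` kernel:
`(T_K y)(x) = ∬_{u,v>0, u+v ≥ x} K(u,v,x) y(u) y(v)/(u+v) du dv`. -/
noncomputable def TK2 (ε : ℝ) (y : ℝ → ℝ) (x : ℝ) : ℝ :=
  ∫ p in {p : ℝ × ℝ | 0 < p.1 ∧ 0 < p.2 ∧ x ≤ p.1 + p.2},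
    pertK2 ε p.1 p.2 x * (y p.1 * y p.2 / (p.1 + p.2))

lemma integrableOn_exp_neg_mul {s : ℝ} (hs : 0 < s) :
    IntegrableOn (fun t => exp (-(s * t))) (Ioi (0:ℝ)) := by
  have h := exp_neg_integrableOn_Ioi 0 hs
  simpa [neg_mul] using h

lemma tendsto_neg_exp_div {s : ℝ} (hs : 0 < s) :
    Filter.Tendsto (fun t => -exp (-(s * t)) / s) Filter.atTop (nhds 0) := by
  have h : Filter.Tendsto (fun t : ℝ => -(s * t)) Filter.atTop Filter.atBot := by
    refine Filter.tendsto_atBot.mpr (fun b => ?_)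
    filter_upwards [Filter.eventually_ge_atTop (-b / s)] with t ht
    have h2 : s * (-b / s) ≤ s * t := mul_le_mul_of_nonneg_left ht hs.le
    have h3 : s * (-b / s) = -b := by field_simp
    linarith
  have := (Real.tendsto_exp_atBot.comp h).neg.div_const s
  simpa using this

lemma hasDerivAt_neg_exp_div {s : ℝ} (hs : 0 < s) (x : ℝ) :
    HasDerivAt (fun t => -exp (-(s * t)) / s) (exp (-(s * x))) x := by
  have h1 : HasDerivAt (fun t : ℝ => -(s * t)) (-s) x := by
    simpa using (hasDerivAt_id x).const_mul (-s)
  have h2 : HasDerivAt (fun t => exp (-(s * t))) (exp (-(s * x)) * (-s)) x :=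
    (Real.hasDerivAt_exp _).comp x h1
  have h3 := (h2.neg).div_const s
  simp only [mul_neg, neg_neg] at h3
  rwa [mul_div_assoc, div_self hs.ne', mul_one] at h3

lemma integral_exp_neg_mul_Ioi' {s : ℝ} (hs : 0 < s) :
    ∫ t in Ioi (0:ℝ), exp (-(s * t)) = 1 / s := by
  have hcont : ContinuousWithinAt (fun t => -exp (-(s * t)) / s) (Ici 0) 0 :=
    (((Real.continuous_exp.comp (by continuity)).neg).div_const s).continuousWithinAt
  have := integral_Ioi_of_hasDerivAt_of_tendsto hcont
    (fun x _ => hasDerivAt_neg_exp_div hs x)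
    (integrableOn_exp_neg_mul hs)
    (tendsto_neg_exp_div hs)
  simp only [mul_zero, neg_zero, exp_zero] at this
  rw [this]; ring

lemma lint_exp_Ioi {c s : ℝ} (hc : 0 ≤ c) (hs : 0 < s) :
    ∫⁻ t in Ioi (0:ℝ), ENNReal.ofReal (c * exp (-(s * t))) = ENNReal.ofReal (c / s) := by
  have hint : IntegrableOn (fun t => c * exp (-(s * t))) (Ioi (0:ℝ)) :=
    (integrableOn_exp_neg_mul hs).const_mul c
  rw [← ofReal_integral_eq_lintegral_ofReal hint]
  · rw [integral_const_mul, integral_exp_neg_mul_Ioi' hs]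
    congr 1; ring
  · filter_upwards with t
    positivity

lemma hasDerivAt_F {a : ℝ} (ha : 0 < a) {x : ℝ} (hx : 0 ≤ x) :
    HasDerivAt (fun t => -(a^2)/(a+t)) ((a/(a+x))^2) x := by
  have hne : a + x ≠ 0 := by positivity
  have h1 : HasDerivAt (fun t : ℝ => a + t) 1 x := by
    simpa using (hasDerivAt_id x).const_add a
  have h2 := (h1.inv hne).const_mul (-(a^2))
  have h3 : HasDerivAt (fun t => -(a^2)/(a+t)) (-(a^2) * (-1 / (a+x)^2)) x := h2
  convert h3 using 1
  field_simp

lemma tendsto_F {a : ℝ} (ha : 0 < a) :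
    Filter.Tendsto (fun t => -(a^2)/(a+t)) Filter.atTop (nhds 0) := by
  have h : Filter.Tendsto (fun t : ℝ => a + t) Filter.atTop Filter.atTop :=
    Filter.tendsto_atTop_add_const_left _ a Filter.tendsto_id
  have := (Filter.Tendsto.inv_tendsto_atTop h).const_mul (-(a^2))
  simpa [div_eq_mul_inv] using this

lemma cont_F {a : ℝ} (ha : 0 < a) :
    ContinuousWithinAt (fun t => -(a^2)/(a+t)) (Ici 0) 0 := by
  apply ContinuousAt.continuousWithinAt
  have hne : a + (0:ℝ) ≠ 0 := by positivity
  fun_prop (disch := assumption)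

lemma integrableOn_sq {a : ℝ} (ha : 0 < a) :
    IntegrableOn (fun t => (a/(a+t))^2) (Ioi (0:ℝ)) := by
  refine integrableOn_Ioi_deriv_of_nonneg (cont_F ha)
    (fun x hx => hasDerivAt_F ha (le_of_lt hx)) (fun x hx => by positivity) (tendsto_F ha)

lemma integral_sq {a : ℝ} (ha : 0 < a) :
    ∫ t in Ioi (0:ℝ), (a/(a+t))^2 = a := by
  have := integral_Ioi_of_hasDerivAt_of_tendsto (cont_F ha)
    (fun x hx => hasDerivAt_F ha (le_of_lt hx)) (integrableOn_sq ha) (tendsto_F ha)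
  rw [this]
  field_simp
  ring

lemma inner_eq_s18 {a : ℝ} (ha : 0 < a) {u v : ℝ} (hu : 0 < u) (hv : 0 < v) :
    ENNReal.ofReal (a^2 * exp (-(a * (u+v))) / (u+v)) =
    ∫⁻ t in Ioi (0:ℝ),
      ENNReal.ofReal (a * exp (-((a+t)*u))) * ENNReal.ofReal (a * exp (-((a+t)*v))) := by
  have hs : 0 < u + v := by linarith
  have hc : 0 ≤ a^2 * exp (-(a*(u+v))) := by positivity
  rw [← lint_exp_Ioi hc hs]
  refine lintegral_congr (fun t => ?_)
  rw [← ENNReal.ofReal_mul (by positivity)]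
  congr 1
  have h : exp (-(a*(u+v))) * exp (-((u+v)*t)) = exp (-((a+t)*u)) * exp (-((a+t)*v)) := by
    rw [← exp_add, ← exp_add]; congr 1; ring
  linear_combination (a^2) * h

lemma mid_eq {a : ℝ} (ha : 0 < a) {u : ℝ} (hu : 0 < u) :
    ∫⁻ v in Ioi (0:ℝ), ENNReal.ofReal (a^2 * exp (-(a * (u+v))) / (u+v)) =
    ∫⁻ t in Ioi (0:ℝ), ENNReal.ofReal (a * exp (-((a+t)*u))) * ENNReal.ofReal (a / (a+t)) := by
  calc
    _ = ∫⁻ v in Ioi (0:ℝ), ∫⁻ t in Ioi (0:ℝ),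
          ENNReal.ofReal (a * exp (-((a+t)*u))) * ENNReal.ofReal (a * exp (-((a+t)*v))) := by
        refine setLIntegral_congr_fun measurableSet_Ioi ?_
        intro v hv
        exact inner_eq_s18 ha hu hv
    _ = ∫⁻ t in Ioi (0:ℝ), ∫⁻ v in Ioi (0:ℝ),
          ENNReal.ofReal (a * exp (-((a+t)*u))) * ENNReal.ofReal (a * exp (-((a+t)*v))) := by
        apply lintegral_lintegral_swap
        apply Measurable.aemeasurable
        fun_prop
    _ = _ := by
        refine setLIntegral_congr_fun measurableSet_Ioi ?_
        intro t ht
        dsimp only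
        have ht' : (0:ℝ) < t := mem_Ioi.mp ht
        rw [lintegral_const_mul _ (by fun_prop), lint_exp_Ioi ha.le (by linarith : (0:ℝ) < a + t)]

lemma key_lintegral {a : ℝ} (ha : 0 < a) :
    ∫⁻ p in (Ioi (0:ℝ) ×ˢ Ioi (0:ℝ)),
      ENNReal.ofReal (a^2 * exp (-(a * (p.1 + p.2))) / (p.1 + p.2)) =
      ENNReal.ofReal a := by
  have hfm : Measurable fun p : ℝ × ℝ =>
      ENNReal.ofReal (a^2 * exp (-(a * (p.1 + p.2))) / (p.1 + p.2)) := by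
    fun_prop
  rw [Measure.volume_eq_prod, ← Measure.prod_restrict, lintegral_prod _ hfm.aemeasurable]
  calc
    _ = ∫⁻ u in Ioi (0:ℝ), ∫⁻ t in Ioi (0:ℝ),
          ENNReal.ofReal (a * exp (-((a+t)*u))) * ENNReal.ofReal (a / (a+t)) := by
        refine setLIntegral_congr_fun measurableSet_Ioi ?_
        intro u hu
        exact mid_eq ha hu
    _ = ∫⁻ t in Ioi (0:ℝ), ∫⁻ u in Ioi (0:ℝ),
          ENNReal.ofReal (a * exp (-((a+t)*u))) * ENNReal.ofReal (a / (a+t)) := by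
        apply lintegral_lintegral_swap
        apply Measurable.aemeasurable
        fun_prop
    _ = ∫⁻ t in Ioi (0:ℝ), ENNReal.ofReal ((a / (a+t))^2) := by
        refine setLIntegral_congr_fun measurableSet_Ioi ?_
        intro t ht
        dsimp only
        have ht' : (0:ℝ) < t := mem_Ioi.mp ht
        have hat : (0:ℝ) < a + t := by linarith
        rw [lintegral_mul_const _ (by fun_prop), lint_exp_Ioi ha.le hat,
          ← ENNReal.ofReal_mul (by positivity)]
        congr 1; ring
    _ = ENNReal.ofReal a := by
        rw [← ofReal_integral_eq_lintegral_ofReal (integrableOn_sq ha)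
          (by filter_upwards with t; positivity), integral_sq ha]


lemma key_integral {a : ℝ} (ha : 0 < a) :
    ∫ p in (Ioi (0:ℝ) ×ˢ Ioi (0:ℝ)), a^2 * exp (-(a * (p.1 + p.2))) / (p.1 + p.2) = a := by
  have hm : AEStronglyMeasurable (fun p : ℝ × ℝ => a^2 * exp (-(a * (p.1 + p.2))) / (p.1 + p.2))
      ((volume : Measure (ℝ × ℝ)).restrict (Ioi 0 ×ˢ Ioi 0)) :=
    ((by fun_prop : Measurable fun p : ℝ × ℝ => a^2 * exp (-(a * (p.1 + p.2)))).div
      (measurable_fst.add measurable_snd)).aestronglyMeasurable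
  have hnn : 0 ≤ᵐ[(volume : Measure (ℝ × ℝ)).restrict (Ioi 0 ×ˢ Ioi 0)]
      fun p : ℝ × ℝ => a^2 * exp (-(a * (p.1 + p.2))) / (p.1 + p.2) := by
    filter_upwards [ae_restrict_mem (measurableSet_Ioi.prod measurableSet_Ioi)] with p hp
    simp only [Pi.zero_apply]
    obtain ⟨h1, h2⟩ := hp
    simp only [mem_Ioi] at h1 h2
    have hs : (0:ℝ) < p.1 + p.2 := by linarith
    positivity
  rw [integral_eq_lintegral_of_nonneg_ae hnn hm, key_lintegral ha, ENNReal.toReal_ofReal ha.le]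

/-- for `ε ≠ 0`, the exponential density `a e^{-ax}` is no longer
a fixed point of the perturbed operator `T_K`. -/
theorem exp_not_fixed_point_TK2 (ε : ℝ) (hε : ε ≠ 0) (a : ℝ) (ha : 0 < a) :
    ∃ x : ℝ, 0 ≤ x ∧ TK2 ε (fun t => a * exp (-a * t)) x ≠ a * exp (-a * x) := by
  refine ⟨0, le_refl 0, ?_⟩
  have hset : {p : ℝ × ℝ | 0 < p.1 ∧ 0 < p.2 ∧ (0:ℝ) ≤ p.1 + p.2} = Ioi 0 ×ˢ Ioi 0 := by
    ext p
    simp only [mem_setOf_eq, mem_prod, mem_Ioi]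
    constructor
    · rintro ⟨h1, h2, _⟩; exact ⟨h1, h2⟩
    · rintro ⟨h1, h2⟩; exact ⟨h1, h2, by linarith⟩
  have hval : TK2 ε (fun t => a * exp (-a * t)) 0 = (1 - ε/3) * a := by
    rw [TK2, hset]
    have hfun : ∀ p : ℝ × ℝ,
        pertK2 ε p.1 p.2 0 * ((a * exp (-a * p.1)) * (a * exp (-a * p.2)) / (p.1 + p.2)) =
        (1 - ε/3) * (a^2 * exp (-(a * (p.1 + p.2))) / (p.1 + p.2)) := by
      intro p
      have hK : pertK2 ε p.1 p.2 0 = 1 - ε/3 := by simp [pertK2]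
      have he : (a * exp (-a * p.1)) * (a * exp (-a * p.2)) =
          a^2 * exp (-(a * (p.1 + p.2))) := by
        have h1 : (a * exp (-a * p.1)) * (a * exp (-a * p.2)) =
            a^2 * (exp (-a * p.1) * exp (-a * p.2)) := by ring
        rw [h1, ← exp_add]
        congr 1
        ring
      rw [hK, he]
    simp only [hfun]
    rw [integral_const_mul, key_integral ha]
  rw [hval]
  simp only [mul_zero, neg_zero, exp_zero, mul_one]
  intro h
  apply hε
  have h2 : ε * a = 0 := by nlinarith [h]
  rcases mul_eq_zero.mp h2 with h3 | h3
  · exact h3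
  · exact absurd h3 ha.ne'
end
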